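/- arXiv:2311.15729 — 4 statements merged into one kernel-verified Lean document; each statement's English description precedes it below -/
import Mathlib

section
/- For every σ ∈ (0,1) there is a constant C (depending only on σ, ε, m, θ) such that for all k sufficiently large, all r ∈ S_k, and all x ∈ Ω_1: Σ_{j=2}^k e^{−|x − ξ_j|/ε} ≤ C e^{−(1−σ)|x − ξ_1|/ε} e^{−σπr/(kε)}. -/
/- Common setup: dimension N = n+3 ≥ 3, Euclidean space, Laplacian, norms,
   the limit profile U, potential conditions (V1), (V2±), peak locations, etc. -/

noncomputable section
open Real MeasureTheory Finset Filter

/-- `ℝ^N` with `N = n + 3 ≥ 3`. -/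
abbrev Euc (n : ℕ) : Type := EuclideanSpace ℝ (Fin (n + 3))

/-- The Laplacian, as the sum of the second partial derivatives. -/
def lap {n : ℕ} (u : Euc n → ℝ) (x : Euc n) : ℝ :=
  ∑ i : Fin (n + 3),
    fderiv ℝ (fun y => fderiv ℝ u y (EuclideanSpace.single i 1)) x (EuclideanSpace.single i 1)

/-- Radial symmetry (about the origin). -/
def IsRadial {n : ℕ} (u : Euc n → ℝ) : Prop := ∀ x y : Euc n, ‖x‖ = ‖y‖ → u x = u y

/-- `u` solves `-ε²Δu + V u = |u|^{p-2}u` on `ℝ^N`. -/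
def IsSol {n : ℕ} (ε : ℝ) (V : Euc n → ℝ) (p : ℝ) (u : Euc n → ℝ) : Prop :=
  ∀ x, -ε ^ 2 * lap u x + V x * u x = |u x| ^ (p - 2) * u x

/-- The standard `H¹(ℝ^N)` norm. -/
def h1Norm {n : ℕ} (u : Euc n → ℝ) : ℝ :=
  Real.sqrt (∫ x, (‖gradient u x‖ ^ 2 + u x ^ 2))

/-- Membership in `H¹(ℝ^N)`. -/
def MemH1 {n : ℕ} (u : Euc n → ℝ) : Prop :=
  MemLp u 2 volume ∧ MemLp (fun x => gradient u x) 2 volume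

/-- The inner product `⟨u,v⟩ = ∫ ε²∇u·∇v + V(x) u v`. -/
def innerV {n : ℕ} (ε : ℝ) (V : Euc n → ℝ) (u v : Euc n → ℝ) : ℝ :=
  ∫ x, (ε ^ 2 * (inner ℝ (gradient u x) (gradient v x) : ℝ) + V x * u x * v x)

/-- The norm induced by `innerV`. -/
def normV {n : ℕ} (ε : ℝ) (V : Euc n → ℝ) (u : Euc n → ℝ) : ℝ :=
  Real.sqrt (∫ x, (ε ^ 2 * ‖gradient u x‖ ^ 2 + V x * u x ^ 2))

/-- Properties of the unique positive radial ground state `U` of `-ΔU + U = U^{p-1}`: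
positivity, radial symmetry, the equation, maximum at 0, strict radial decrease, and the
decay `U(r) e^r r^{(N-1)/2} → C > 0`. -/
def UProps {n : ℕ} (p : ℝ) (U : Euc n → ℝ) : Prop :=
  (∀ x, 0 < U x) ∧ IsRadial U ∧ (∀ x, -lap U x + U x = U x ^ (p - 1)) ∧
    (∀ x, U x ≤ U 0) ∧ (∀ x y : Euc n, ‖x‖ < ‖y‖ → U y < U x) ∧
    ∃ C : ℝ, 0 < C ∧
      Tendsto (fun r : ℝ =>
          U (r • EuclideanSpace.single (0 : Fin (n + 3)) (1 : ℝ)) * Real.exp r *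
            r ^ ((n + 2 : ℝ) / 2)) atTop (nhds C)

/-- Condition (V1): `V` is radially symmetric about `0`, `0` is a nondegenerate critical
point of `V`, and `V(0) > 0`. -/
def V1cond {n : ℕ} (V : Euc n → ℝ) : Prop :=
  IsRadial V ∧ 0 < V 0 ∧ fderiv ℝ V 0 = 0 ∧
    ∀ v : Euc n, fderiv ℝ (fderiv ℝ V) 0 v = 0 → v = 0

/-- Condition (V2+): `V(x) = 1 + a/|x|^m + O(|x|^{-(m+δ)})` as `|x| → ∞`. -/
def V2plus {n : ℕ} (V : Euc n → ℝ) (a m δ : ℝ) : Prop :=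
  ∃ C R : ℝ, ∀ x : Euc n, R ≤ ‖x‖ → |V x - 1 - a / ‖x‖ ^ m| ≤ C / ‖x‖ ^ (m + δ)

/-- Condition (V2−): `V(x) = 1 - a/|x|^m + O(|x|^{-(m+δ)})` as `|x| → ∞`. -/
def V2minus {n : ℕ} (V : Euc n → ℝ) (a m δ : ℝ) : Prop :=
  ∃ C R : ℝ, ∀ x : Euc n, R ≤ ‖x‖ → |V x - 1 + a / ‖x‖ ^ m| ≤ C / ‖x‖ ^ (m + δ)

/-- The rescaled ground state `U_ε(x) = U(x/ε)`. -/
def Uscaled {n : ℕ} (ε : ℝ) (U : Euc n → ℝ) (x : Euc n) : ℝ := U (ε⁻¹ • x)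

/-- The peak locations `ξ_j = (r cos(2(j-1)π/k), r sin(2(j-1)π/k), 0)`. -/
def ξpt (n k : ℕ) (r : ℝ) (j : ℕ) : Euc n :=
  r • ((Real.cos (2 * ((j : ℝ) - 1) * π / k)) • EuclideanSpace.single (0 : Fin (n + 3)) (1 : ℝ)
      + (Real.sin (2 * ((j : ℝ) - 1) * π / k)) • EuclideanSpace.single (1 : Fin (n + 3)) (1 : ℝ))

/-- `S_k = [(εm/(2π) - θ) k ln k, (εm/(2π) + θ) k ln k]`. -/
def Sk (ε m θ : ℝ) (k : ℕ) : Set ℝ :=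
  Set.Icc ((ε * m / (2 * π) - θ) * (k * Real.log k)) ((ε * m / (2 * π) + θ) * (k * Real.log k))

/-- Flip the sign of the `i`-th coordinate. -/
def negCoord {n : ℕ} (i : Fin (n + 3)) (x : Euc n) : Euc n :=
  WithLp.toLp 2 (fun j => if j = i then -(x j) else x j)

/-- Rotation by angle `θ` in the `(x₁,x₂)` plane. -/
def rotPlane (n : ℕ) (θ : ℝ) (x : Euc n) : Euc n :=
  WithLp.toLp 2 (fun j => if j = 0 then Real.cos θ * x 0 - Real.sin θ * x 1
           else if j = 1 then Real.sin θ * x 0 + Real.cos θ * x 1 else x j)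

/-- The symmetry class `H_s`: `H¹` functions even in `x₂,…,x_N` and invariant under
rotations by multiples of `2π/k` in the `(x₁,x₂)` plane. -/
def InHs (n k : ℕ) (u : Euc n → ℝ) : Prop :=
  MemH1 u ∧
    (∀ i : Fin (n + 3), 1 ≤ (i : ℕ) → ∀ x, u (negCoord i x) = u x) ∧
    (∀ j : ℕ, ∀ x, u (rotPlane n (2 * π * j / k) x) = u x)

/-- `Z_j = ∂U_{ε,ξ_j}/∂r`. -/
def Zfun (n k : ℕ) (ε : ℝ) (U : Euc n → ℝ) (r : ℝ) (j : ℕ) (x : Euc n) : ℝ :=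
  deriv (fun s : ℝ => Uscaled ε U (x - ξpt n k s j)) r

/-- `Σ_{j=1}^k Z_j`. -/
def sumZ (n k : ℕ) (ε : ℝ) (U : Euc n → ℝ) (r : ℝ) (x : Euc n) : ℝ :=
  ∑ j ∈ Icc 1 k, Zfun n k ε U r j x

/-- The class `E_k ⊆ H_s`: orthogonality `Σ_j ∫ U_{ε,ξ_j}^{p-2} Z_j v = 0`. -/
def InEk (n k : ℕ) (ε p r : ℝ) (U : Euc n → ℝ) (v : Euc n → ℝ) : Prop :=
  InHs n k v ∧
    ∑ j ∈ Icc 1 k, ∫ x, (Uscaled ε U (x - ξpt n k r j)) ^ (p - 2) * Zfun n k ε U r j x * v x = 0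

/-- The approximate solution `W_{ε,k} = u_ε + Σ_{j=1}^k U_{ε,ξ_j}`. -/
def Wfun (n k : ℕ) (ε r : ℝ) (U uε : Euc n → ℝ) (x : Euc n) : ℝ :=
  uε x + ∑ j ∈ Icc 1 k, Uscaled ε U (x - ξpt n k r j)

/-- The bilinear form defining `L_k`: `⟨L_k ω, φ⟩ = Bform ω φ`. -/
def Bform (n k : ℕ) (ε p r : ℝ) (V U uε : Euc n → ℝ) (ω φ : Euc n → ℝ) : ℝ :=
  ∫ x, (ε ^ 2 * (inner ℝ (gradient ω x) (gradient φ x) : ℝ) + V x * ω x * φ x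
      - (p - 1) * (Wfun n k ε r U uε x) ^ (p - 2) * ω x * φ x)

/-- The linear form defining `l_k`: `⟨l_k, φ⟩ = lform φ`. -/
def lform (n k : ℕ) (ε p r : ℝ) (V U uε : Euc n → ℝ) (φ : Euc n → ℝ) : ℝ :=
  (∑ j ∈ Icc 1 k, ∫ x, (1 - V x) * Uscaled ε U (x - ξpt n k r j) * φ x)
    + ∫ x, ((Wfun n k ε r U uε x) ^ (p - 1) - (uε x) ^ (p - 1)
        - ∑ j ∈ Icc 1 k, (Uscaled ε U (x - ξpt n k r j)) ^ (p - 1)) * φ x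

/-- The form defining `R_k(ω)`: `⟨R_k(ω), φ⟩ = Rform ω φ`. -/
def Rform (n k : ℕ) (ε p r : ℝ) (U uε : Euc n → ℝ) (ω φ : Euc n → ℝ) : ℝ :=
  ∫ x, ((Wfun n k ε r U uε x + ω x) ^ (p - 1) - (Wfun n k ε r U uε x) ^ (p - 1)
      - (p - 1) * (Wfun n k ε r U uε x) ^ (p - 2) * ω x) * φ x

/-- The energy functional `I(u) = ½∫(ε²|∇u|² + V u²) − (1/p)∫|u|^p`. -/
def energy {n : ℕ} (ε : ℝ) (V : Euc n → ℝ) (p : ℝ) (u : Euc n → ℝ) : ℝ :=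
  (1 / 2) * (∫ x, (ε ^ 2 * ‖gradient u x‖ ^ 2 + V x * u x ^ 2)) - (1 / p) * ∫ x, |u x| ^ p

/-- The conclusion of Theorem 1.1 (Theorem `thm0`), packaged as a predicate on the
family `ε ↦ u_ε` with remainder family `ε ↦ ω_ε`: for each `ε ∈ (0,ε₀)`, `u_ε` is a
radial solution of the form `V(0)^{1/(p-2)} U(√V(0)·/ε) + ω_ε` with radial `ω_ε`, and
`‖ω_ε‖_{H¹} = o(ε^{N/2})` as `ε → 0⁺`. -/
def Thm0Family (n : ℕ) (p : ℝ) (U V : Euc n → ℝ) (ε₀ : ℝ) (uu ω : ℝ → Euc n → ℝ) : Prop :=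
  (∀ ε ∈ Set.Ioo (0 : ℝ) ε₀,
      IsSol ε V p (uu ε) ∧ IsRadial (uu ε) ∧ IsRadial (ω ε) ∧
        ∀ x, uu ε x = V 0 ^ (1 / (p - 2)) * U ((Real.sqrt (V 0) / ε) • x) + ω ε x) ∧
    Tendsto (fun ε : ℝ => h1Norm (ω ε) / ε ^ ((n + 3 : ℝ) / 2))
      (nhdsWithin 0 (Set.Ioi 0)) (nhds 0)

lemma xi_apply0 (n k : ℕ) (r : ℝ) (j : ℕ) :
    ξpt n k r j 0 = r * Real.cos (2 * ((j : ℝ) - 1) * π / k) := by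
  simp [ξpt, EuclideanSpace.single_apply, Fin.ext_iff]

lemma xi_apply1 (n k : ℕ) (r : ℝ) (j : ℕ) :
    ξpt n k r j 1 = r * Real.sin (2 * ((j : ℝ) - 1) * π / k) := by
  simp [ξpt, EuclideanSpace.single_apply, Fin.ext_iff]

lemma xi_inner (n k : ℕ) (r : ℝ) (j : ℕ) (x : Euc n) :
    (inner ℝ x (ξpt n k r j) : ℝ)
      = r * (Real.cos (2 * ((j : ℝ) - 1) * π / k) * x 0
        + Real.sin (2 * ((j : ℝ) - 1) * π / k) * x 1) := by
  rw [real_inner_comm]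
  simp [ξpt, inner_add_left, real_inner_smul_left, EuclideanSpace.inner_single_left]
  ring

lemma xi_norm_sq (n k : ℕ) (r : ℝ) (j : ℕ) : ‖ξpt n k r j‖ ^ 2 = r ^ 2 := by
  rw [← real_inner_self_eq_norm_sq, xi_inner, xi_apply0, xi_apply1]
  have := Real.sin_sq_add_cos_sq (2 * ((j : ℝ) - 1) * π / k)
  nlinarith

lemma norm_sub_xi_sq (n k : ℕ) (r : ℝ) (j : ℕ) (x : Euc n) :
    ‖x - ξpt n k r j‖ ^ 2 = ‖x‖ ^ 2
      - 2 * (r * (Real.cos (2 * ((j : ℝ) - 1) * π / k) * x 0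
        + Real.sin (2 * ((j : ℝ) - 1) * π / k) * x 1)) + r ^ 2 := by
  rw [norm_sub_sq_real, xi_inner, xi_norm_sq]

lemma keyGeom (n k : ℕ) (r : ℝ) (j : ℕ) (hk : 3 ≤ k) (hj2 : 2 ≤ j) (hjk : j ≤ k)
    (hr : 0 ≤ r) (x : Euc n)
    (hx : Real.cos (π / k) ≤ x 0 / Real.sqrt ((x 0) ^ 2 + (x 1) ^ 2)) :
    ‖x - ξpt n k r 1‖ ≤ ‖x - ξpt n k r j‖ := by
  have hkpos : (0:ℝ) < k := by positivity
  set β : ℝ := π / k with hβdef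
  set ψ : ℝ := ((j : ℝ) - 1) * π / k with hψdef
  have hβpos : 0 < β := by positivity
  have hβlt : β < π / 2 := by
    rw [hβdef, div_lt_div_iff₀ hkpos two_pos]
    nlinarith [Real.pi_pos, show (3:ℝ) ≤ k by exact_mod_cast hk]
  have hcosβ : 0 < Real.cos β := Real.cos_pos_of_mem_Ioo ⟨by linarith, hβlt⟩
  have hsinβ : 0 ≤ Real.sin β := Real.sin_nonneg_of_nonneg_of_le_pi hβpos.le
    (by linarith [Real.pi_pos])
  have hj1 : (1:ℝ) ≤ (j:ℝ) - 1 := by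
    have : (2:ℝ) ≤ j := by exact_mod_cast hj2
    linarith
  have hjk' : (j:ℝ) - 1 ≤ (k:ℝ) - 1 := by
    have : (j:ℝ) ≤ k := by exact_mod_cast hjk
    linarith
  have hψβ : β ≤ ψ := by
    rw [hψdef, hβdef, div_le_div_iff₀ hkpos hkpos]
    nlinarith [Real.pi_pos, mul_pos Real.pi_pos hkpos]
  have hψπβ : ψ ≤ π - β := by
    have hsum : ψ + β = (j : ℝ) * π / k := by
      rw [hψdef, hβdef]; field_simp; ring
    have hle : (j : ℝ) * π / k ≤ π := by
      rw [div_le_iff₀ hkpos]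
      have hjk2 : (j:ℝ) ≤ k := by exact_mod_cast hjk
      nlinarith [Real.pi_pos]
    linarith
  have hψ0 : 0 ≤ ψ := le_trans hβpos.le hψβ
  have hψπ : ψ ≤ π := by linarith
  have hs : 0 ≤ Real.sin ψ := Real.sin_nonneg_of_nonneg_of_le_pi hψ0 hψπ
  -- polar data
  set ρ : ℝ := Real.sqrt ((x 0) ^ 2 + (x 1) ^ 2) with hρdef
  have hρ0 : 0 ≤ ρ := Real.sqrt_nonneg _
  have hρsq : ρ ^ 2 = (x 0) ^ 2 + (x 1) ^ 2 := Real.sq_sqrt (by positivity)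
  have hρpos : 0 < ρ := by
    rcases hρ0.lt_or_eq with h | h
    · exact h
    · exfalso
      rw [← h, div_zero] at hx
      linarith [hcosβ]
  have hx0 : ρ * Real.cos β ≤ x 0 := by
    rw [le_div_iff₀ hρpos] at hx
    linarith
  have habs : |x 1| ≤ ρ * Real.sin β := by
    have h1 : x 1 ^ 2 ≤ (ρ * Real.sin β) ^ 2 := by
      have hpy := Real.sin_sq_add_cos_sq β
      nlinarith [mul_nonneg hρ0 hcosβ.le]
    have := Real.sqrt_le_sqrt h1
    rwa [Real.sqrt_sq_eq_abs, Real.sqrt_sq (by positivity)] at this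
  have key : |Real.cos ψ| * Real.sin β ≤ Real.sin ψ * Real.cos β := by
    rcases abs_cases (Real.cos ψ) with ⟨he, h0⟩ | ⟨he, h0⟩ <;> rw [he]
    · have h2 : 0 ≤ Real.sin (ψ - β) :=
        Real.sin_nonneg_of_nonneg_of_le_pi (by linarith) (by linarith)
      rw [Real.sin_sub] at h2; linarith
    · have h2 : 0 ≤ Real.sin (ψ + β) :=
        Real.sin_nonneg_of_nonneg_of_le_pi (by linarith) (by linarith)
      rw [Real.sin_add] at h2; linarith
  have main : Real.cos ψ * x 1 ≤ Real.sin ψ * x 0 := by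
    calc Real.cos ψ * x 1 ≤ |Real.cos ψ * x 1| := le_abs_self _
    _ = |Real.cos ψ| * |x 1| := abs_mul _ _
    _ ≤ |Real.cos ψ| * (ρ * Real.sin β) := by
        exact mul_le_mul_of_nonneg_left habs (abs_nonneg _)
    _ = (|Real.cos ψ| * Real.sin β) * ρ := by ring
    _ ≤ (Real.sin ψ * Real.cos β) * ρ := mul_le_mul_of_nonneg_right key hρ0
    _ = Real.sin ψ * (ρ * Real.cos β) := by ring
    _ ≤ Real.sin ψ * x 0 := mul_le_mul_of_nonneg_left hx0 hs
  -- compare squared norms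
  have ha : 2 * ((j : ℝ) - 1) * π / k = 2 * ψ := by rw [hψdef]; ring
  have hsq : ‖x - ξpt n k r 1‖ ^ 2 ≤ ‖x - ξpt n k r j‖ ^ 2 := by
    rw [norm_sub_xi_sq, norm_sub_xi_sq, ha]
    have e1 : 2 * (((1:ℕ) : ℝ) - 1) * π / k = 0 := by push_cast; ring
    have hpy := Real.sin_sq_add_cos_sq ψ
    have hc2 : Real.cos (2 * ψ) = 1 - 2 * Real.sin ψ ^ 2 := by
      linear_combination Real.cos_two_mul ψ + 2 * hpy
    rw [e1, Real.cos_zero, Real.sin_zero, hc2, Real.sin_two_mul]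
    have hkey : 0 ≤ r * (Real.sin ψ * (Real.sin ψ * x 0 - Real.cos ψ * x 1)) :=
      mul_nonneg hr (mul_nonneg hs (sub_nonneg.mpr main))
    linarith [hkey]
  have := Real.sqrt_le_sqrt hsq
  rwa [Real.sqrt_sq (norm_nonneg _), Real.sqrt_sq (norm_nonneg _)] at this

lemma pi_cube : π ^ 3 ≤ 31.5 := by
  have h1 : π < 3.15 := Real.pi_lt_d2
  have h0 : 0 < π := Real.pi_pos
  nlinarith [sq_nonneg π, sq_nonneg (π - 3.15)]

lemma sin_lb (k m : ℕ) (hk : 7 ≤ k) (hm : 1 ≤ m) (hmk : 2 * m ≤ k) :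
    π + ((m:ℝ) - 1) - 63 / (k:ℝ)^2 ≤ (k:ℝ) * Real.sin ((m:ℝ) * π / k) := by
  have hkpos : (0:ℝ) < k := by positivity
  have hπ3 : (3:ℝ) < π := Real.pi_gt_three
  have hπ315 : π < 3.15 := Real.pi_lt_d2
  have hπc := pi_cube
  have hk7 : (7:ℝ) ≤ k := by exact_mod_cast hk
  rcases le_or_gt m 2 with h2 | h3
  · have hd : π ^ 3 / (4 * (k:ℝ)^2) ≤ 63 / (k:ℝ)^2 := by
      rw [div_le_div_iff₀ (by positivity) (by positivity)]
      nlinarith [pow_pos hkpos 2, Real.pi_pos]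
    interval_cases m
    · have e1 : ((1:ℕ):ℝ) * π / k = π / k := by push_cast; ring
      rw [e1]
      have hx0 : 0 < π / (k:ℝ) := by positivity
      have hx1 : π / (k:ℝ) ≤ 1 := by rw [div_le_one hkpos]; nlinarith [hπ315]
      have hb : π/k - (π/k)^3/4 ≤ Real.sin (π/k) := by
        have := Real.sin_gt_sub_cube hx0; nlinarith [pow_pos hx0 3]
      have key : (k:ℝ) * (π/k - (π/k)^3/4) ≤ k * Real.sin (π/k) :=
        mul_le_mul_of_nonneg_left hb hkpos.le
      have e2 : (k:ℝ) * (π/k - (π/k)^3/4) = π - π^3/(4*(k:ℝ)^2) := by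
        field_simp
      rw [e2] at key
      push_cast
      linarith
    · have e1 : ((2:ℕ):ℝ) * π / k = 2*π / k := by push_cast; ring
      rw [e1]
      have hx0 : 0 < 2*π / (k:ℝ) := by positivity
      have hx1 : 2*π / (k:ℝ) ≤ 1 := by rw [div_le_one hkpos]; nlinarith [hπ315]
      have hb : 2*π/k - (2*π/k)^3/4 ≤ Real.sin (2*π/k) := by
        have := Real.sin_gt_sub_cube hx0; nlinarith [pow_pos hx0 3]
      have key : (k:ℝ) * (2*π/k - (2*π/k)^3/4) ≤ k * Real.sin (2*π/k) :=
        mul_le_mul_of_nonneg_left hb hkpos.le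
      have e2 : (k:ℝ) * (2*π/k - (2*π/k)^3/4) = 2*π - 2*π^3/(k:ℝ)^2 := by
        field_simp; ring
      rw [e2] at key
      have hd2 : 2*π^3/(k:ℝ)^2 ≤ 63/(k:ℝ)^2 := by
        rw [div_le_div_iff₀ (by positivity) (by positivity)]
        nlinarith [pow_pos hkpos 2]
      push_cast
      linarith
  · have hm3 : (3:ℝ) ≤ m := by exact_mod_cast h3
    have hmk' : 2 * (m:ℝ) ≤ k := by exact_mod_cast hmk
    have hx0 : (0:ℝ) ≤ (m:ℝ) * π / k := by positivity
    have hx2 : (m:ℝ) * π / k ≤ π / 2 := by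
      rw [div_le_div_iff₀ hkpos two_pos]
      nlinarith
    have hsin := Real.mul_le_sin hx0 hx2
    have h63 : (0:ℝ) ≤ 63 / (k:ℝ)^2 := by positivity
    have hks : (k:ℝ) * (2/π * ((m:ℝ)*π/k)) = 2*m := by
      field_simp
    linarith [mul_le_mul_of_nonneg_left hsin hkpos.le, hks]

lemma gsum (q : ℝ) (h0 : 0 ≤ q) (h1 : q ≤ 1/2) (N : ℕ) : ∑ i ∈ range N, q^i ≤ 2 := by
  induction N with
  | zero => simp
  | succ n ih =>
    rw [geom_sum_succ]
    nlinarith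


lemma xi_dist (n k : ℕ) (r : ℝ) (hr : 0 ≤ r) (j : ℕ) (hj1 : 1 ≤ j) (hjk : j ≤ k) :
    ‖ξpt n k r j - ξpt n k r 1‖ = 2 * r * Real.sin (((j:ℝ) - 1) * π / k) := by
  have hkpos : (0:ℝ) < k := by
    have : 1 ≤ k := le_trans hj1 hjk
    exact_mod_cast Nat.pos_of_ne_zero (by omega)
  set ψ : ℝ := ((j:ℝ) - 1) * π / k with hψdef
  have hψ0 : 0 ≤ ψ := by
    have h1 : (1:ℝ) ≤ j := by exact_mod_cast hj1
    rw [hψdef]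
    exact div_nonneg (mul_nonneg (by linarith) Real.pi_pos.le) hkpos.le
  have hψπ : ψ ≤ π := by
    have hjk' : (j:ℝ) ≤ k := by exact_mod_cast hjk
    rw [hψdef, div_le_iff₀ hkpos]
    nlinarith [Real.pi_pos]
  have hs : 0 ≤ Real.sin ψ := Real.sin_nonneg_of_nonneg_of_le_pi hψ0 hψπ
  have ha : 2 * ((j : ℝ) - 1) * π / k = 2 * ψ := by rw [hψdef]; ring
  have hpy := Real.sin_sq_add_cos_sq ψ
  have hc2 : Real.cos (2 * ψ) = 1 - 2 * Real.sin ψ ^ 2 := by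
    linear_combination Real.cos_two_mul ψ + 2 * hpy
  have hsq : ‖ξpt n k r j - ξpt n k r 1‖ ^ 2 = (2 * r * Real.sin ψ) ^ 2 := by
    rw [norm_sub_sq_real, xi_norm_sq, xi_norm_sq, xi_inner, xi_apply0, xi_apply1, ha, hc2]
    have e1 : 2 * (((1:ℕ):ℝ) - 1) * π / k = 0 := by push_cast; ring
    rw [e1, Real.cos_zero, Real.sin_zero]
    ring
  calc ‖ξpt n k r j - ξpt n k r 1‖
      = Real.sqrt (‖ξpt n k r j - ξpt n k r 1‖ ^ 2) := (Real.sqrt_sq (norm_nonneg _)).symm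
    _ = Real.sqrt ((2 * r * Real.sin ψ) ^ 2) := by rw [hsq]
    _ = 2 * r * Real.sin ψ := Real.sqrt_sq (by positivity)

lemma keyGeom2 (n k : ℕ) (r : ℝ) (j : ℕ) (hk : 3 ≤ k) (hj2 : 2 ≤ j) (hjk : j ≤ k)
    (hr : 0 ≤ r) (x : Euc n)
    (hx : Real.cos (π / k) ≤ x 0 / Real.sqrt ((x 0) ^ 2 + (x 1) ^ 2)) :
    r * Real.sin (((j:ℝ) - 1) * π / k) ≤ ‖x - ξpt n k r j‖ := by
  have hA := keyGeom n k r j hk hj2 hjk hr x hx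
  have hd := xi_dist n k r hr j (by omega) hjk
  have htri : ‖ξpt n k r j - ξpt n k r 1‖ ≤ ‖x - ξpt n k r j‖ + ‖x - ξpt n k r 1‖ := by
    have h := norm_sub_le_norm_sub_add_norm_sub (ξpt n k r j) x (ξpt n k r 1)
    rwa [norm_sub_rev (ξpt n k r j) x] at h
  linarith

lemma icc_reindex (f : ℕ → ℝ) (k : ℕ) : ∑ j ∈ Icc 2 k, f j = ∑ i ∈ range (k-1), f (2+i) := by
  have h : Icc 2 k = Ico 2 (k+1) := by rw [Nat.Icc_eq_range', Nat.Ico_eq_range']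
  rw [h, sum_Ico_eq_sum_range]
  have h2 : k + 1 - 2 = k - 1 := by omega
  rw [h2]

lemma sumExp (k : ℕ) (t : ℝ) (hk : 7 ≤ k) (ht : 1 ≤ t) (htk : t * 63 ≤ (k:ℝ)^2) :
    ∑ j ∈ Icc 2 k, Real.exp (-(t * ((k:ℝ) * Real.sin (((j:ℝ) - 1) * π / k)))) ≤
      Real.exp 1 * 4 * Real.exp (-(t * π)) := by
  have hkpos : (0:ℝ) < k := by positivity
  have ht0 : 0 ≤ t := by linarith
  set q : ℝ := Real.exp (-t) with hq
  have hq0 : 0 ≤ q := (Real.exp_pos _).le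
  have hq12 : q ≤ 1/2 := by
    have h1 : Real.exp (-t) ≤ Real.exp (-1) := Real.exp_le_exp.mpr (by linarith)
    have h21 : (2:ℝ) ≤ Real.exp 1 := by linarith [Real.add_one_le_exp 1]
    have h2 : Real.exp (-1) ≤ 1/2 := by
      rw [Real.exp_neg, inv_eq_one_div]
      exact one_div_le_one_div_of_le (by norm_num) h21
    linarith
  have hterm : ∀ j ∈ Icc 2 k,
      Real.exp (-(t * ((k:ℝ) * Real.sin (((j:ℝ) - 1) * π / k)))) ≤
        Real.exp 1 * Real.exp (-(t * π)) * (q ^ (j-2) + q ^ (k-j)) := by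
    intro j hj
    rw [mem_Icc] at hj
    obtain ⟨hj2, hjk⟩ := hj
    set i := j - 1 with hi
    set mm := min i (k - i) with hmmdef
    have hi1 : 1 ≤ i := by omega
    have hmm1 : 1 ≤ mm := by omega
    have hmmk : 2 * mm ≤ k := by omega
    have hcast : ((j:ℝ) - 1) = (i:ℝ) := by
      rw [hi]; push_cast [Nat.cast_sub (by omega : 1 ≤ j)]; ring
    have hsin_eq : Real.sin (((j:ℝ) - 1) * π / k) = Real.sin ((mm:ℝ) * π / k) := by
      rw [hcast]
      rcases le_total i (k - i) with h | h
      · have hmi : mm = i := by omega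
        rw [hmi]
      · have hmi : mm = k - i := by omega
        rw [hmi]
        have e : ((k - i : ℕ):ℝ) * π / k = π - (i:ℝ) * π / k := by
          rw [Nat.cast_sub (by omega : i ≤ k)]
          field_simp
        rw [e, Real.sin_pi_sub]
    have hlb := sin_lb k mm hk hmm1 hmmk
    have h63 : t * 63 / (k:ℝ)^2 ≤ 1 := by
      rw [div_le_one (by positivity)]; linarith
    have hexp : -(t * ((k:ℝ) * Real.sin (((j:ℝ) - 1) * π / k))) ≤
        1 - t * π - t * ((mm:ℝ) - 1) := by
      rw [hsin_eq]
      have h' := mul_le_mul_of_nonneg_left hlb ht0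
      have e : t * (π + ((mm:ℝ) - 1) - 63 / (k:ℝ)^2)
          = t*π + t*((mm:ℝ)-1) - t*63/(k:ℝ)^2 := by ring
      rw [e] at h'
      linarith
    calc Real.exp (-(t * ((k:ℝ) * Real.sin (((j:ℝ) - 1) * π / k))))
        ≤ Real.exp (1 - t * π - t * ((mm:ℝ) - 1)) := Real.exp_le_exp.mpr hexp
      _ = Real.exp 1 * Real.exp (-(t * π)) * Real.exp (-(t * ((mm:ℝ) - 1))) := by
          rw [← Real.exp_add, ← Real.exp_add]; ring_nf
      _ ≤ Real.exp 1 * Real.exp (-(t * π)) * (q ^ (j-2) + q ^ (k-j)) := by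
          apply mul_le_mul_of_nonneg_left _ (by positivity)
          have hpow : Real.exp (-(t * ((mm:ℝ) - 1))) = q ^ (mm - 1) := by
            rw [hq, ← Real.exp_nat_mul]
            congr 1
            rw [Nat.cast_sub hmm1]
            push_cast; ring
          rw [hpow]
          rcases le_total i (k - i) with h | h
          · have : mm - 1 = j - 2 := by omega
            rw [this]
            nlinarith [pow_nonneg hq0 (k - j)]
          · have : mm - 1 = k - j := by omega
            rw [this]
            nlinarith [pow_nonneg hq0 (j - 2)]
  calc ∑ j ∈ Icc 2 k, Real.exp (-(t * ((k:ℝ) * Real.sin (((j:ℝ) - 1) * π / k))))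
      ≤ ∑ j ∈ Icc 2 k, Real.exp 1 * Real.exp (-(t * π)) * (q ^ (j-2) + q ^ (k-j)) :=
        Finset.sum_le_sum hterm
    _ = Real.exp 1 * Real.exp (-(t * π)) * ∑ j ∈ Icc 2 k, (q ^ (j-2) + q ^ (k-j)) := by
        rw [Finset.mul_sum]
    _ ≤ Real.exp 1 * Real.exp (-(t * π)) * 4 := by
        apply mul_le_mul_of_nonneg_left _ (by positivity)
        rw [Finset.sum_add_distrib]
        have h1 : ∑ j ∈ Icc 2 k, q ^ (j-2) ≤ 2 := by
          rw [icc_reindex (fun j => q ^ (j-2)) k]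
          have e : ∀ i, q ^ (2 + i - 2) = q ^ i := fun i => by congr 1; omega
          simp only [e]
          exact gsum q hq0 hq12 _
        have h2 : ∑ j ∈ Icc 2 k, q ^ (k-j) ≤ 2 := by
          rw [icc_reindex (fun j => q ^ (k-j)) k]
          rw [← Finset.sum_range_reflect (fun i => q ^ (k - (2+i))) (k-1)]
          have hle : ∑ j ∈ range (k-1), q ^ (k - (2 + (k - 1 - 1 - j))) ≤
              ∑ j ∈ range (k-1), q ^ j := by
            apply Finset.sum_le_sum
            intro j hj
            rw [mem_range] at hj
            have e : k - (2 + (k - 1 - 1 - j)) = j := by omega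
            rw [e]
          exact le_trans hle (gsum q hq0 hq12 _)
        linarith
    _ = Real.exp 1 * 4 * Real.exp (-(t * π)) := by ring

/-- the tail estimate (2.12) for the sum of translated exponential peaks on
the sector `Ω₁ = {x : ⟨x'/|x'|, ξ₁'/|ξ₁'|⟩ ≥ cos(π/k)}` (here `ξ₁ = (r,0,…,0)`, so the
condition reads `x₁/|x'| ≥ cos(π/k)`). -/
theorem tailEstimate (n : ℕ) (ε m θ : ℝ) (hε : 0 < ε) (hm : 1 < m)
    (hθ : 0 < θ) (hθ' : θ < ε * m / (2 * π)) :
    ∀ σ ∈ Set.Ioo (0 : ℝ) 1, ∃ C : ℝ, 0 < C ∧ ∃ k₀ : ℕ, ∀ k ≥ k₀, ∀ r ∈ Sk ε m θ k,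
      ∀ x : Euc n,
        Real.cos (π / k) ≤ x 0 / Real.sqrt ((x 0) ^ 2 + (x 1) ^ 2) →
        ∑ j ∈ Icc 2 k, Real.exp (-‖x - ξpt n k r j‖ / ε) ≤
          C * Real.exp (-((1 - σ) * ‖x - ξpt n k r 1‖) / ε) *
            Real.exp (-(σ * π * r) / ((k : ℝ) * ε)) := by
  intro σ hσ
  obtain ⟨hσ0, hσ1⟩ := hσ
  have hπ : (0:ℝ) < π := Real.pi_pos
  have h2π : (0:ℝ) < 2*π := by positivity
  set c₁ : ℝ := σ * (m / (2*π) - θ/ε) with hc₁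
  set c₂ : ℝ := σ * (m / (2*π) + θ/ε) with hc₂
  have hθε : θ/ε < m/(2*π) := by
    rw [div_lt_div_iff₀ hε h2π]
    rw [lt_div_iff₀ h2π] at hθ'
    linarith
  have hc₁pos : 0 < c₁ := by
    apply mul_pos hσ0; linarith [div_nonneg hθ.le hε.le]
  have hc₂pos : 0 < c₂ := by
    apply mul_pos hσ0
    have h1 : 0 < θ/ε := div_pos hθ hε
    linarith
  refine ⟨Real.exp 1 * 4, by positivity, ?_⟩
  obtain ⟨k₀, hk₀⟩ := exists_nat_ge (max (max 7 (Real.exp (1/c₁))) (63*c₂))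
  refine ⟨k₀, ?_⟩
  intro k hk r hr x hx
  have hkR : (max (max 7 (Real.exp (1/c₁))) (63*c₂)) ≤ (k:ℝ) :=
    le_trans hk₀ (Nat.cast_le.mpr hk)
  have hk7R : (7:ℝ) ≤ k := le_trans (le_trans (le_max_left _ _) (le_max_left _ _)) hkR
  have hkexp : Real.exp (1/c₁) ≤ k :=
    le_trans (le_trans (le_max_right 7 _) (le_max_left _ _)) hkR
  have hk63 : 63*c₂ ≤ k := le_trans (le_max_right _ _) hkR
  have hk7 : 7 ≤ k := by exact_mod_cast hk7R
  have hkpos : (0:ℝ) < k := by linarith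
  have hlog : 1/c₁ ≤ Real.log k := by
    rw [← Real.log_exp (1/c₁)]
    exact Real.log_le_log (Real.exp_pos _) hkexp
  have hlogpos : 0 < Real.log k := lt_of_lt_of_le (by positivity) hlog
  obtain ⟨hr1, hr2⟩ := hr
  have hcoef : 0 < ε*m/(2*π) - θ := by linarith
  have hklog0 : 0 ≤ (k:ℝ) * Real.log k := by positivity
  have hr0 : 0 ≤ r := le_trans (mul_nonneg hcoef.le hklog0) hr1
  set t : ℝ := σ * r / (k * ε) with htdef
  have ht1 : 1 ≤ t := by
    have e : c₁ * Real.log k * (k*ε) = σ*((ε*m/(2*π)-θ)*((k:ℝ)*Real.log k)) := by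
      rw [hc₁]; field_simp
    have h := mul_le_mul_of_nonneg_left hr1 hσ0.le
    have h2 : c₁ * Real.log k ≤ t := by
      rw [htdef, le_div_iff₀ (by positivity)]
      calc c₁ * Real.log k * ((k:ℝ) * ε) = σ*((ε*m/(2*π)-θ)*((k:ℝ)*Real.log k)) := e
        _ ≤ σ * r := h
    have h3 : 1 ≤ c₁ * Real.log k := by
      rw [div_le_iff₀ hc₁pos] at hlog
      linarith
    linarith
  have ht2 : t ≤ c₂ * Real.log k := by
    have e : c₂ * Real.log k * (k*ε) = σ*((ε*m/(2*π)+θ)*((k:ℝ)*Real.log k)) := by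
      rw [hc₂]; field_simp
    have h := mul_le_mul_of_nonneg_left hr2 hσ0.le
    rw [htdef, div_le_iff₀ (by positivity)]
    calc σ * r ≤ σ*((ε*m/(2*π)+θ)*((k:ℝ)*Real.log k)) := h
      _ = c₂ * Real.log k * ((k:ℝ) * ε) := e.symm
  have htk : t * 63 ≤ (k:ℝ)^2 := by
    have hlogk : Real.log k ≤ k := by
      linarith [Real.log_le_sub_one_of_pos hkpos]
    have h1 : t*63 ≤ 63*(c₂*Real.log k) := by linarith
    have h2 : (63*c₂)*Real.log k ≤ (k:ℝ)*k :=
      mul_le_mul hk63 hlogk hlogpos.le hkpos.le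
    nlinarith
  have hmain : ∀ j ∈ Icc 2 k,
      Real.exp (-‖x - ξpt n k r j‖ / ε) ≤
        Real.exp (-((1 - σ) * ‖x - ξpt n k r 1‖) / ε) *
          Real.exp (-(t * ((k:ℝ) * Real.sin (((j:ℝ) - 1) * π / k)))) := by
    intro j hj
    rw [mem_Icc] at hj
    have hk3 : 3 ≤ k := by omega
    have hA := keyGeom n k r j hk3 hj.1 hj.2 hr0 x hx
    have hB := keyGeom2 n k r j hk3 hj.1 hj.2 hr0 x hx
    rw [← Real.exp_add]
    apply Real.exp_le_exp.mpr
    have et : -(t * ((k:ℝ) * Real.sin (((j:ℝ) - 1) * π / k)))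
        = -(σ * (r * Real.sin (((j:ℝ) - 1) * π / k))) / ε := by
      rw [htdef]; field_simp
    rw [et]
    have ecomb : -((1 - σ) * ‖x - ξpt n k r 1‖) / ε
        + -(σ * (r * Real.sin (((j:ℝ) - 1) * π / k))) / ε
        = (-((1 - σ) * ‖x - ξpt n k r 1‖) - σ * (r * Real.sin (((j:ℝ) - 1) * π / k))) / ε := by
      ring
    rw [ecomb, div_le_div_iff_of_pos_right hε]
    have hA' := mul_le_mul_of_nonneg_left hA (by linarith : (0:ℝ) ≤ 1 - σ)
    have hB' := mul_le_mul_of_nonneg_left hB hσ0.le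
    linarith
  calc ∑ j ∈ Icc 2 k, Real.exp (-‖x - ξpt n k r j‖ / ε)
      ≤ ∑ j ∈ Icc 2 k, Real.exp (-((1 - σ) * ‖x - ξpt n k r 1‖) / ε) *
          Real.exp (-(t * ((k:ℝ) * Real.sin (((j:ℝ) - 1) * π / k)))) :=
        Finset.sum_le_sum hmain
    _ = Real.exp (-((1 - σ) * ‖x - ξpt n k r 1‖) / ε) *
          ∑ j ∈ Icc 2 k, Real.exp (-(t * ((k:ℝ) * Real.sin (((j:ℝ) - 1) * π / k)))) := by
        rw [Finset.mul_sum]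
    _ ≤ Real.exp (-((1 - σ) * ‖x - ξpt n k r 1‖) / ε) *
          (Real.exp 1 * 4 * Real.exp (-(t * π))) :=
        mul_le_mul_of_nonneg_left (sumExp k t hk7 ht1 htk) (Real.exp_pos _).le
    _ = Real.exp 1 * 4 * Real.exp (-((1 - σ) * ‖x - ξpt n k r 1‖) / ε) *
          Real.exp (-(σ * π * r) / ((k : ℝ) * ε)) := by
        have e : -(t * π) = -(σ * π * r) / ((k:ℝ) * ε) := by rw [htdef]; ring
        rw [e]; ring
end
end

section
/- For fixed ε > 0, N ≥ 3, m > 1 and small θ > 0, the one-dimensional sums over nearest neighbors satisfy: uniformly for r ∈ S_k, Σ_{j=2}^k (2r sin((j−1)π/k))^{−(N−1)/2} e^{−2r sin((j−1)π/k)/ε} = 2 (2r sin(π/k))^{−(N−1)/2} e^{−2r sin(π/k)/ε} (1 + o(1)) as k → ∞; that is, the sum over all peaks is asymptotically carried by the two nearest neighbors j = 2 and j = k. -/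
/- Common setup: dimension N = n+3 ≥ 3, Euclidean space, Laplacian, norms,
   the limit profile U, potential conditions (V1), (V2±), peak locations, etc. -/

noncomputable section
open Real MeasureTheory Finset Filter

set_option maxHeartbeats 1000000

lemma geomTail (q : ℝ) (hq0 : 0 ≤ q) (hq : q ≤ 1/2) :
    ∀ n : ℕ, ∑ j ∈ Finset.Icc 3 (n+2), q^(j-1) ≤ 2*q^2 - 2*q^(n+2) := by
  intro n
  induction n with
  | zero =>
      rw [Finset.Icc_eq_empty (by omega), Finset.sum_empty]
      norm_num
  | succ n ih =>
      rw [show n + 1 + 2 = (n + 2) + 1 by omega,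
        Finset.sum_Icc_succ_top (by omega : 3 ≤ (n+2)+1)]
      have h1 : 0 ≤ q ^ (n + 2) := pow_nonneg hq0 _
      have h2 : q ^ (n + 2 + 1) = q ^ (n + 2) * q := by ring
      have h3 : n + 2 + 1 - 1 = n + 2 := rfl
      rw [h3, h2]
      nlinarith [ih, mul_le_mul_of_nonneg_left (show q ≤ 1/2 from hq) h1]

lemma sinDiff (k t : ℕ) (hk4 : 4 ≤ k) (ht2 : 2 ≤ t) (htk : 2 * t ≤ k) :
    Real.sin (π / k) + (2 - π/2) * t / k ≤ Real.sin ((t:ℝ) * π / k) := by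
  have hπ := Real.pi_pos
  have hkpos : (0:ℝ) < k := by exact_mod_cast (show 0 < k by omega)
  have ht2R : (2:ℝ) ≤ (t:ℝ) := by exact_mod_cast ht2
  have htkR : 2*(t:ℝ) ≤ (k:ℝ) := by exact_mod_cast htk
  have h2 : (t:ℝ)*π/k ≤ π/2 := by
    rw [div_le_div_iff₀ hkpos (by norm_num : (0:ℝ) < 2)]
    nlinarith
  have hj := Real.mul_le_sin (by positivity : (0:ℝ) ≤ (t:ℝ)*π/k) h2
  have hj' : 2*(t:ℝ)/k ≤ Real.sin ((t:ℝ)*π/k) := by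
    calc 2*(t:ℝ)/k = 2/π * ((t:ℝ)*π/k) := by field_simp
      _ ≤ _ := hj
  have hs1 : Real.sin (π/k) ≤ π/k := Real.sin_le (by positivity)
  have hnum : π + (2 - π/2)*(t:ℝ) ≤ 2*(t:ℝ) := by nlinarith
  have key := div_le_div_of_nonneg_right hnum hkpos.le
  have e1 : (π + (2 - π/2)*(t:ℝ))/(k:ℝ) = π/k + (2 - π/2)*(t:ℝ)/k := by ring
  have e2 : (2*(t:ℝ))/(k:ℝ) = 2*(t:ℝ)/k := by ring
  rw [e1, e2] at key
  linarith

/-- the sum over the peaks `Σ_{j=2}^k (2r sin((j-1)π/k))^{-(N-1)/2}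
e^{-2r sin((j-1)π/k)/ε}` is asymptotically carried by the two nearest neighbours
`j = 2` and `j = k`, uniformly for `r ∈ S_k`. -/
theorem nearestNeighbour (N : ℕ) (hN : 3 ≤ N) (ε m θ : ℝ) (hε : 0 < ε) (hm : 1 < m)
    (hθ : 0 < θ) (hθ' : θ < ε * m / (2 * π)) :
    ∀ η : ℝ, 0 < η → ∃ k₀ : ℕ, ∀ k ≥ k₀, ∀ r ∈ Sk ε m θ k,
      |(∑ j ∈ Icc 2 k,
            (2 * r * Real.sin (((j : ℝ) - 1) * π / k)) ^ (-((N : ℝ) - 1) / 2) *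
              Real.exp (-(2 * r * Real.sin (((j : ℝ) - 1) * π / k)) / ε))
          - 2 * (2 * r * Real.sin (π / k)) ^ (-((N : ℝ) - 1) / 2) *
              Real.exp (-(2 * r * Real.sin (π / k)) / ε)| ≤
        η * (2 * (2 * r * Real.sin (π / k)) ^ (-((N : ℝ) - 1) / 2) *
            Real.exp (-(2 * r * Real.sin (π / k)) / ε)) := by
  intro η hη
  have hπ : (0:ℝ) < π := Real.pi_pos
  have hπ4 : π < 4 := by linarith [Real.pi_lt_d2]
  set c₀ : ℝ := 2 - π/2 with hc₀def
  have hc₀ : 0 < c₀ := by rw [hc₀def]; linarith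
  have h2π : (0:ℝ) < 2 * π := by linarith
  set α : ℝ := m / (2*π) - θ/ε with hαdef
  have hα : 0 < α := by
    rw [hαdef, sub_pos, div_lt_div_iff₀ hε h2π]
    rw [lt_div_iff₀ h2π] at hθ'
    linarith
  set β₀ : ℝ := 2 * c₀ * α with hβ₀def
  have hβ₀ : 0 < β₀ := by positivity
  have hT : Tendsto (fun k : ℕ => Real.exp (-(β₀ * Real.log k))) atTop (nhds 0) := by
    apply Real.tendsto_exp_atBot.comp
    apply tendsto_neg_atBot_iff.mpr
    exact (Real.tendsto_log_atTop.comp tendsto_natCast_atTop_atTop).const_mul_atTop hβ₀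
  have hEv : ∀ᶠ k : ℕ in atTop, Real.exp (-(β₀ * Real.log k)) ≤ min (1/2) η := by
    have hpos : (0:ℝ) < min (1/2) η := by positivity
    filter_upwards [hT.eventually_lt_const hpos] with k hk using hk.le
  obtain ⟨k₁, hk₁⟩ := eventually_atTop.mp hEv
  refine ⟨max k₁ 4, fun k hk r hr => ?_⟩
  have hk4 : 4 ≤ k := le_trans (le_max_right _ _) hk
  have hqmin := hk₁ k (le_trans (le_max_left _ _) hk)
  set q : ℝ := Real.exp (-(β₀ * Real.log k)) with hqdef
  have hq0 : 0 ≤ q := (Real.exp_pos _).le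
  have hqh : q ≤ 1/2 := hqmin.trans (min_le_left _ _)
  have hqη : q ≤ η := hqmin.trans (min_le_right _ _)
  have hkR : (4:ℝ) ≤ (k:ℝ) := by exact_mod_cast hk4
  have hkpos : (0:ℝ) < k := by linarith
  have hkne : (k:ℝ) ≠ 0 := ne_of_gt hkpos
  have hklog : 0 < Real.log k := Real.log_pos (by linarith)
  have hsub : 0 < ε * m / (2*π) - θ := sub_pos.mpr hθ'
  have hrlow : (ε * m / (2*π) - θ) * (k * Real.log k) ≤ r := hr.1
  have hr0 : 0 < r :=
    lt_of_lt_of_le (mul_pos hsub (mul_pos hkpos hklog)) hrlow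
  have hεα : ε * m / (2*π) - θ = ε * α := by rw [hαdef]; field_simp
  have hrkey : ε * α * (k * Real.log k) ≤ r := by rw [← hεα]; exact hrlow
  set e : ℝ := -((N : ℝ) - 1) / 2 with hedef
  have he : e ≤ 0 := by
    rw [hedef]
    have h3N : (3:ℝ) ≤ (N:ℝ) := by exact_mod_cast hN
    apply div_nonpos_of_nonpos_of_nonneg <;> linarith
  set B : ℝ := 2 * r * Real.sin (π / k) with hBdef
  have hsin1pos : 0 < Real.sin (π / k) :=
    Real.sin_pos_of_pos_of_lt_pi (by positivity)
      (div_lt_self hπ (by linarith : 1 < (k:ℝ)))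
  have hBpos : 0 < B := by rw [hBdef]; positivity
  set F2 : ℝ := B ^ e * Real.exp (-B / ε) with hF2def
  have hF2pos : 0 < F2 := by
    rw [hF2def]
    exact mul_pos (Real.rpow_pos_of_pos hBpos e) (Real.exp_pos _)
  set G : ℕ → ℝ := fun j =>
    (2 * r * Real.sin (((j : ℝ) - 1) * π / k)) ^ e *
      Real.exp (-(2 * r * Real.sin (((j : ℝ) - 1) * π / k)) / ε) with hGdef
  have hG2 : G 2 = F2 := by
    simp only [hGdef, hF2def, hBdef]
    norm_num
  have hGk : G k = F2 := by
    simp only [hGdef, hF2def, hBdef]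
    have harg : ((k : ℝ) - 1) * π / k = π - π / k := by field_simp
    rw [harg, Real.sin_pi_sub]
  -- per-term bound
  have hterm : ∀ j ∈ Finset.Icc 3 (k-1), G j ≤ (q^(j-1) + q^(k+1-j)) * F2 := by
    intro j hj
    rw [Finset.mem_Icc] at hj
    set s : ℕ := j - 1 with hsdef
    set t : ℕ := min s (k - s) with htdef
    have hs2 : 2 ≤ s := by omega
    have ht2 : 2 ≤ t := by omega
    have htk : 2 * t ≤ k := by omega
    have hscast : ((s : ℕ) : ℝ) = (j : ℝ) - 1 := by
      rw [hsdef, Nat.cast_sub (by omega : 1 ≤ j)]; norm_num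
    have htpos : (0:ℝ) < (t:ℝ) := by
      have : (2:ℝ) ≤ (t:ℝ) := by exact_mod_cast ht2
      linarith
    have hsins : Real.sin ((s:ℝ) * π / k) = Real.sin ((t:ℝ) * π / k) := by
      rcases Nat.le_total s (k - s) with h | h
      · rw [htdef, min_eq_left h]
      · rw [htdef, min_eq_right h]
        have hsk' : s ≤ k := by omega
        have hcast : ((k - s : ℕ) : ℝ) = (k:ℝ) - (s:ℝ) := by
          rw [Nat.cast_sub hsk']
        rw [hcast, show ((k:ℝ) - (s:ℝ)) * π / k = π - (s:ℝ) * π / k by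
          field_simp, Real.sin_pi_sub]
    have hdiff0 := sinDiff k t hk4 ht2 htk
    have hdiff : c₀ * (t:ℝ) / k ≤ Real.sin ((s:ℝ) * π / k) - Real.sin (π / k) := by
      rw [hsins, hc₀def]
      linarith
    have hss : Real.sin (π / k) ≤ Real.sin ((s:ℝ) * π / k) := by
      have hcnn : (0:ℝ) ≤ c₀ * (t:ℝ) / k := by positivity
      linarith
    set A : ℝ := 2 * r * Real.sin ((s:ℝ) * π / k) with hAdef
    have hBA : B ≤ A := by
      rw [hBdef, hAdef]
      exact mul_le_mul_of_nonneg_left hss (by linarith : (0:ℝ) ≤ 2 * r)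
    have hABdiff : A - B = 2 * r * (Real.sin ((s:ℝ) * π / k) - Real.sin (π / k)) := by
      rw [hAdef, hBdef]; ring
    have hAB : ε * (β₀ * Real.log k * (t:ℝ)) ≤ A - B := by
      have h1 : ε * (β₀ * Real.log k * (t:ℝ))
          = (2 * c₀ * (t:ℝ) / k) * (ε * α * (k * Real.log k)) := by
        rw [hβ₀def]; field_simp
      have h2 : (2 * c₀ * (t:ℝ) / k) * (ε * α * (k * Real.log k))
          ≤ (2 * c₀ * (t:ℝ) / k) * r :=
        mul_le_mul_of_nonneg_left hrkey (by positivity)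
      have h3 : 2 * r * (c₀ * (t:ℝ) / k)
          ≤ 2 * r * (Real.sin ((s:ℝ) * π / k) - Real.sin (π / k)) :=
        mul_le_mul_of_nonneg_left hdiff (by linarith : (0:ℝ) ≤ 2 * r)
      calc ε * (β₀ * Real.log k * (t:ℝ))
          = (2 * c₀ * (t:ℝ) / k) * (ε * α * (k * Real.log k)) := h1
        _ ≤ (2 * c₀ * (t:ℝ) / k) * r := h2
        _ = 2 * r * (c₀ * (t:ℝ) / k) := by ring
        _ ≤ 2 * r * (Real.sin ((s:ℝ) * π / k) - Real.sin (π / k)) := h3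
        _ = A - B := hABdiff.symm
    have hexp : Real.exp (-A / ε) ≤ q ^ t * Real.exp (-B / ε) := by
      rw [hqdef, ← Real.exp_nat_mul, ← Real.exp_add, Real.exp_le_exp]
      have key : -A / ε = -(A - B) / ε + -B / ε := by ring
      rw [key]
      have h5 : -(A - B) / ε ≤ (t:ℝ) * -(β₀ * Real.log k) := by
        rw [div_le_iff₀ hε]
        have hrw : (t:ℝ) * -(β₀ * Real.log k) * ε
            = -(ε * (β₀ * Real.log k * (t:ℝ))) := by ring
        rw [hrw]
        linarith
      linarith
    have hpow : A ^ e ≤ B ^ e := Real.rpow_le_rpow_of_nonpos hBpos hBA he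
    have hqt : q ^ t ≤ q ^ (j-1) + q ^ (k+1-j) := by
      rcases Nat.le_total s (k - s) with h | h
      · have ht' : t = j - 1 := by omega
        rw [ht']
        exact le_add_of_nonneg_right (pow_nonneg hq0 _)
      · have ht' : t = k + 1 - j := by omega
        rw [ht']
        exact le_add_of_nonneg_left (pow_nonneg hq0 _)
    have hGj : G j = A ^ e * Real.exp (-A / ε) := by
      simp only [hGdef]
      rw [hAdef, hscast]
    rw [hGj, hF2def]
    calc A ^ e * Real.exp (-A / ε)
        ≤ B ^ e * (q ^ t * Real.exp (-B / ε)) :=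
          mul_le_mul hpow hexp (Real.exp_pos _).le (Real.rpow_nonneg hBpos.le e)
      _ = q ^ t * (B ^ e * Real.exp (-B / ε)) := by ring
      _ ≤ (q^(j-1) + q^(k+1-j)) * (B ^ e * Real.exp (-B / ε)) :=
          mul_le_mul_of_nonneg_right hqt
            (mul_nonneg (Real.rpow_nonneg hBpos.le e) (Real.exp_pos _).le)
  -- split the sum
  have hsplit : Finset.Icc 2 k = insert 2 (insert k (Finset.Icc 3 (k-1))) := by
    ext x
    simp only [Finset.mem_Icc, Finset.mem_insert]
    omega
  have h2notin : (2:ℕ) ∉ insert k (Finset.Icc 3 (k-1)) := by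
    simp only [Finset.mem_insert, Finset.mem_Icc]
    omega
  have hknotin : k ∉ Finset.Icc 3 (k-1) := by
    simp only [Finset.mem_Icc]
    omega
  have hsum : (∑ j ∈ Finset.Icc 2 k, G j)
      = F2 + (F2 + ∑ j ∈ Finset.Icc 3 (k-1), G j) := by
    rw [hsplit, Finset.sum_insert h2notin, Finset.sum_insert hknotin, hG2, hGk]
  have h2F2 : 2 * B ^ e * Real.exp (-B / ε) = 2 * F2 := by rw [hF2def]; ring
  rw [h2F2, hsum]
  have hS : (∑ j ∈ Finset.Icc 3 (k-1), G j) ≤ 4 * q^2 * F2 := by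
    have h1 : (∑ j ∈ Finset.Icc 3 (k-1), G j)
        ≤ ∑ j ∈ Finset.Icc 3 (k-1), (q^(j-1) + q^(k+1-j)) * F2 :=
      Finset.sum_le_sum hterm
    have h2 : (∑ j ∈ Finset.Icc 3 (k-1), (q^(j-1) + q^(k+1-j)) * F2)
        = ((∑ j ∈ Finset.Icc 3 (k-1), q^(j-1))
          + ∑ j ∈ Finset.Icc 3 (k-1), q^(k+1-j)) * F2 := by
      rw [← Finset.sum_add_distrib, ← Finset.sum_mul]
    have h3 : (∑ j ∈ Finset.Icc 3 (k-1), q^(k+1-j))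
        = ∑ j ∈ Finset.Icc 3 (k-1), q^(j-1) := by
      apply Finset.sum_nbij' (i := fun a => k + 2 - a) (j := fun a => k + 2 - a)
      · intro a ha; simp only [Finset.mem_Icc] at *; omega
      · intro a ha; simp only [Finset.mem_Icc] at *; omega
      · intro a ha; simp only [Finset.mem_Icc] at *; omega
      · intro a ha; simp only [Finset.mem_Icc] at *; omega
      · intro a ha; simp only [Finset.mem_Icc] at ha; congr 1; omega
    have h4 : (∑ j ∈ Finset.Icc 3 (k-1), q^(j-1)) ≤ 2 * q^2 := by
      have hg := geomTail q hq0 hqh (k - 3)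
      rw [show k - 3 + 2 = k - 1 by omega] at hg
      have := pow_nonneg hq0 (k - 1)
      linarith
    calc (∑ j ∈ Finset.Icc 3 (k-1), G j)
        ≤ ((∑ j ∈ Finset.Icc 3 (k-1), q^(j-1))
          + ∑ j ∈ Finset.Icc 3 (k-1), q^(k+1-j)) * F2 := by rw [← h2]; exact h1
      _ = (2 * ∑ j ∈ Finset.Icc 3 (k-1), q^(j-1)) * F2 := by rw [h3]; ring
      _ ≤ (2 * (2 * q^2)) * F2 := by
          apply mul_le_mul_of_nonneg_right _ hF2pos.le
          linarith
      _ = 4 * q^2 * F2 := by ring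
  have hSnn : 0 ≤ ∑ j ∈ Finset.Icc 3 (k-1), G j := by
    apply Finset.sum_nonneg
    intro j hj
    rw [Finset.mem_Icc] at hj
    have hj1 : (1:ℝ) ≤ (j:ℝ) := by exact_mod_cast (show 1 ≤ j by omega)
    have hjk : (j:ℝ) ≤ (k:ℝ) := by exact_mod_cast (show j ≤ k by omega)
    have hsin : 0 ≤ Real.sin (((j:ℝ) - 1) * π / k) := by
      apply Real.sin_nonneg_of_nonneg_of_le_pi
      · have : (0:ℝ) ≤ (j:ℝ) - 1 := by linarith
        positivity
      · rw [div_le_iff₀ hkpos]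
        have h6 := mul_le_mul_of_nonneg_right (show (j:ℝ) - 1 ≤ (k:ℝ) by linarith) hπ.le
        linarith
    simp only [hGdef]
    exact mul_nonneg (Real.rpow_nonneg (by positivity) e) (Real.exp_pos _).le
  rw [show F2 + (F2 + ∑ j ∈ Finset.Icc 3 (k-1), G j) - 2 * F2
      = ∑ j ∈ Finset.Icc 3 (k-1), G j by ring, abs_of_nonneg hSnn]
  have h4q : 4 * q^2 ≤ 2 * η := by
    have hqq : q * q ≤ (1/2) * η :=
      mul_le_mul hqh hqη hq0 (by norm_num)
    calc 4 * q^2 = 4 * (q * q) := by ring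
      _ ≤ 4 * ((1/2) * η) := by linarith
      _ = 2 * η := by ring
  calc (∑ j ∈ Finset.Icc 3 (k-1), G j) ≤ 4 * q^2 * F2 := hS
    _ ≤ 2 * η * F2 := mul_le_mul_of_nonneg_right h4q hF2pos.le
    _ = η * (2 * F2) := by ring
end
end

section
/- Fix constants a, β, γ, ε > 0, m > 1, N ≥ 3, and θ ∈ (0, εm/(2π)). For each integer k ≥ 2 define F₁₁ : (0,∞) → ℝ by F₁₁(r) = aβ/r^m − (γ/4)(r/k)^{−(N−1)/2} e^{−2πr/(εk)}. Then for all k sufficiently large, F₁₁ attains its maximum over S_k at an interior point r̄_k, every such maximizer satisfies r̄_k = (εm/(2π) + o(1)) k ln k as k → ∞, F₁₁(r̄_k) > 0, and r̄_k satisfies the critical-point identity maβ/r̄_k^m = (γ/4)(r̄_k/k)^{−(N−1)/2} e^{−2πr̄_k/(εk)} ((N−1)/2 + 2πr̄_k/(εk)). -/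
/- Common setup: dimension N = n+3 ≥ 3, Euclidean space, Laplacian, norms,
   the limit profile U, potential conditions (V1), (V2±), peak locations, etc. -/

noncomputable section
open Real MeasureTheory Finset Filter

/-- The comparison function `F₁₁(r) = aβ/r^m - (γ/4)(r/k)^{-(N-1)/2} e^{-2πr/(εk)}`. -/
def F11 (N k : ℕ) (a β γ ε m : ℝ) (r : ℝ) : ℝ :=
  a * β / r ^ m - (γ / 4) * (r / (k : ℝ)) ^ (-((N : ℝ) - 1) / 2) *
    Real.exp (-(2 * π * r) / (ε * (k : ℝ)))

lemma lim_atBot {α β : ℝ} (hα : α < 0) :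
    Tendsto (fun x : ℝ => α * x + β * Real.log x) atTop atBot := by
  have hlim : Tendsto (fun x : ℝ => Real.log x / x) atTop (nhds 0) :=
    Real.isLittleO_log_id_atTop.tendsto_div_nhds_zero
  have hinner : Tendsto (fun x : ℝ => α + β * (Real.log x / x)) atTop (nhds α) := by
    have := (tendsto_const_nhds : Tendsto (fun _ : ℝ => α) atTop (nhds α)).add (hlim.const_mul β)
    simpa using this
  have h2 : Tendsto (fun x : ℝ => x * (α + β * (Real.log x / x))) atTop atBot :=
    Filter.Tendsto.atTop_mul_neg hα tendsto_id hinner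
  refine h2.congr' ?_
  filter_upwards [eventually_gt_atTop (0:ℝ)] with x hx
  field_simp

lemma lim_atTop {α β : ℝ} (hα : 0 < α) :
    Tendsto (fun x : ℝ => α * x + β * Real.log x) atTop atTop := by
  have hlim : Tendsto (fun x : ℝ => Real.log x / x) atTop (nhds 0) :=
    Real.isLittleO_log_id_atTop.tendsto_div_nhds_zero
  have hinner : Tendsto (fun x : ℝ => α + β * (Real.log x / x)) atTop (nhds α) := by
    have := (tendsto_const_nhds : Tendsto (fun _ : ℝ => α) atTop (nhds α)).add (hlim.const_mul β)
    simpa using this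
  have h2 : Tendsto (fun x : ℝ => x * (α + β * (Real.log x / x))) atTop atTop :=
    Filter.Tendsto.atTop_mul_pos hα tendsto_id hinner
  refine h2.congr' ?_
  filter_upwards [eventually_gt_atTop (0:ℝ)] with x hx
  field_simp

def gfun (N k : ℕ) (γ ε : ℝ) (r : ℝ) : ℝ :=
  (γ / 4) * (r / (k : ℝ)) ^ (-((N : ℝ) - 1) / 2) * Real.exp (-(2 * π * r) / (ε * (k : ℝ)))

def AA (a β m s : ℝ) (k : ℕ) : ℝ := a * β / (s * ((k:ℝ) * Real.log k)) ^ m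

def GG (N : ℕ) (γ ε t : ℝ) (k : ℕ) : ℝ :=
  (γ/4) * (t * Real.log k) ^ (-((N:ℝ)-1)/2) * Real.exp (-(2*π*t/ε) * Real.log k)

lemma gfun_at (N k : ℕ) (γ ε t : ℝ) (hK : 0 < (k:ℝ)) (hε : ε ≠ 0) :
    gfun N k γ ε (t * ((k:ℝ) * Real.log k)) = GG N γ ε t k := by
  unfold gfun GG
  rw [show t * ((k:ℝ) * Real.log k) / (k:ℝ) = t * Real.log k by field_simp,
    show -(2 * π * (t * ((k:ℝ) * Real.log k))) / (ε * (k:ℝ)) = -(2*π*t/ε) * Real.log k by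
      field_simp]

lemma F11_eq (N k : ℕ) (a β γ ε m : ℝ) (r : ℝ) :
    F11 N k a β γ ε m r = a * β / r ^ m - gfun N k γ ε r := rfl

lemma F11_at (N k : ℕ) (a β γ ε m t : ℝ) (hK : 0 < (k:ℝ)) (hε : ε ≠ 0) :
    F11 N k a β γ ε m (t * ((k:ℝ) * Real.log k)) = AA a β m t k - GG N γ ε t k := by
  rw [F11_eq, gfun_at N k γ ε t hK hε]; rfl

lemma gfun_nonneg (N k : ℕ) (γ ε : ℝ) (hγ : 0 ≤ γ) (r : ℝ) (hr : 0 ≤ r) :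
    0 ≤ gfun N k γ ε r := by
  unfold gfun
  have h1 : (0:ℝ) ≤ (r / (k : ℝ)) ^ (-((N : ℝ) - 1) / 2) :=
    Real.rpow_nonneg (div_nonneg hr (Nat.cast_nonneg k)) _
  positivity

lemma gfun_anti (N k : ℕ) (γ ε : ℝ) (hγ : 0 ≤ γ) (hε : 0 < ε) (hK : 0 < (k:ℝ))
    (r1 r2 : ℝ) (h1 : 0 < r1) (h12 : r1 ≤ r2) (hN : 3 ≤ N) :
    gfun N k γ ε r2 ≤ gfun N k γ ε r1 := by
  unfold gfun
  have hq : (-((N : ℝ) - 1) / 2) ≤ 0 := by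
    have : (3:ℝ) ≤ (N:ℝ) := by exact_mod_cast hN
    linarith
  have hb : (0:ℝ) < r1 / (k:ℝ) := div_pos h1 hK
  have h2 : (r2 / (k:ℝ)) ^ (-((N : ℝ) - 1) / 2) ≤ (r1 / (k:ℝ)) ^ (-((N : ℝ) - 1) / 2) :=
    Real.rpow_le_rpow_of_nonpos hb (by gcongr) hq
  have h3 : Real.exp (-(2 * π * r2) / (ε * (k:ℝ))) ≤ Real.exp (-(2 * π * r1) / (ε * (k:ℝ))) := by
    apply Real.exp_le_exp.2
    have hd : (0:ℝ) < ε * (k:ℝ) := by positivity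
    rw [div_le_div_iff₀ hd hd]
    nlinarith [mul_nonneg (mul_nonneg (by positivity : (0:ℝ) ≤ 2*π) (sub_nonneg.2 h12)) hd.le]
  have hx1 : (0:ℝ) ≤ (r1 / (k:ℝ)) ^ (-((N : ℝ) - 1) / 2) := Real.rpow_nonneg hb.le _
  have hx2 : (0:ℝ) ≤ (r2 / (k:ℝ)) ^ (-((N : ℝ) - 1) / 2) := Real.rpow_nonneg (div_nonneg (by linarith) hK.le) _
  apply mul_le_mul (mul_le_mul_of_nonneg_left h2 (by linarith)) h3 (Real.exp_pos _).le
    (mul_nonneg (by linarith) hx1)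

lemma fpart_anti (a β m : ℝ) (hab : 0 ≤ a * β) (hm : 0 ≤ m) (r1 r2 : ℝ) (h1 : 0 < r1)
    (h12 : r1 ≤ r2) : a * β / r2 ^ m ≤ a * β / r1 ^ m := by
  have := Real.rpow_pos_of_pos h1 m
  gcongr
lemma AA_pos (a β m s : ℝ) (k : ℕ) (ha : 0 < a) (hβ : 0 < β) (hs : 0 < s)
    (hL : 0 < (k:ℝ) * Real.log k) : 0 < AA a β m s k := by
  unfold AA
  have := Real.rpow_pos_of_pos (mul_pos hs hL) m
  positivity

lemma GG_nonneg (N : ℕ) (γ ε t : ℝ) (k : ℕ) (hγ : 0 ≤ γ) (ht : 0 ≤ t)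
    (hlk : 0 ≤ Real.log k) : 0 ≤ GG N γ ε t k := by
  unfold GG
  have h1 : (0:ℝ) ≤ (t * Real.log k) ^ (-((N:ℝ)-1)/2) :=
    Real.rpow_nonneg (mul_nonneg ht hlk) _
  exact mul_nonneg (mul_nonneg (by linarith) h1) (Real.exp_pos _).le

lemma AA_scale (a β m s t : ℝ) (k : ℕ) (hs : 0 < s) (ht : 0 < t)
    (hL : 0 < (k:ℝ) * Real.log k) :
    AA a β m t k = (s/t) ^ m * AA a β m s k := by
  unfold AA
  set L := (k:ℝ) * Real.log k
  rw [Real.div_rpow hs.le ht.le, Real.mul_rpow hs.le hL.le, Real.mul_rpow ht.le hL.le]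
  have h1 := (Real.rpow_pos_of_pos hs m).ne'
  have h2 := (Real.rpow_pos_of_pos ht m).ne'
  have h3 := (Real.rpow_pos_of_pos hL m).ne'
  field_simp

lemma GG_eq_AA (N k : ℕ) (a β γ ε m s t : ℝ) (ha : 0 < a) (hβ : 0 < β) (hs : 0 < s)
    (ht : 0 < t) (hlk : 0 < Real.log k) (hK : 0 < (k:ℝ)) :
    GG N γ ε t k = AA a β m s k *
      ((γ/4) * t ^ (-((N:ℝ)-1)/2) * s ^ m / (a*β) *
        Real.exp ((m - 2*π*t/ε) * Real.log k
          + (m + -((N:ℝ)-1)/2) * Real.log (Real.log k))) := by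
  unfold GG AA
  set q : ℝ := -((N:ℝ)-1)/2 with hq
  have h1 : (t * Real.log k) ^ q = t ^ q * Real.exp (Real.log (Real.log k) * q) := by
    rw [Real.mul_rpow ht.le hlk.le, Real.rpow_def_of_pos hlk]
  have h2 : (s * ((k:ℝ) * Real.log k)) ^ m
      = s ^ m * (Real.exp (Real.log (k:ℝ) * m) * Real.exp (Real.log (Real.log k) * m)) := by
    rw [Real.mul_rpow hs.le (by positivity), Real.mul_rpow hK.le hlk.le,
      Real.rpow_def_of_pos hK, Real.rpow_def_of_pos hlk]
  rw [h1, h2]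
  rw [show (m - 2*π*t/ε) * Real.log k + (m + q) * Real.log (Real.log k)
      = (Real.log (k:ℝ) * m + Real.log (Real.log k) * m)
        + (Real.log (Real.log k) * q + (-(2*π*t/ε) * Real.log k)) by ring,
    Real.exp_add, Real.exp_add, Real.exp_add]
  have e1 := Real.exp_ne_zero (Real.log (k:ℝ) * m)
  have e2 := Real.exp_ne_zero (Real.log (Real.log k) * m)
  have hsm := (Real.rpow_pos_of_pos hs m).ne'
  field_simp
lemma factP (N : ℕ) (a β γ ε m t δ : ℝ) (ha : 0 < a) (hβ : 0 < β) (ht : 0 < t)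
    (hδ : 0 < δ) (hα : m - 2*π*t/ε < 0) :
    ∀ᶠ k : ℕ in atTop, GG N γ ε t k < δ * AA a β m t k := by
  set q : ℝ := -((N:ℝ)-1)/2 with hq
  set C0 : ℝ := (γ/4) * t ^ q * t ^ m / (a*β) with hC0
  have hE : Tendsto (fun k : ℕ => C0 * Real.exp ((m - 2*π*t/ε) * Real.log k
      + (m + q) * Real.log (Real.log k))) atTop (nhds 0) := by
    have hcomp : Tendsto (fun k : ℕ => (m - 2*π*t/ε) * Real.log k
        + (m + q) * Real.log (Real.log k)) atTop atBot :=
      (lim_atBot hα).comp (Real.tendsto_log_atTop.comp tendsto_natCast_atTop_atTop)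
    have := (Real.tendsto_exp_atBot.comp hcomp).const_mul C0
    simpa using this
  filter_upwards [hE.eventually (gt_mem_nhds hδ), eventually_ge_atTop 2] with k hEk hk2
  have hK : (0:ℝ) < (k:ℝ) := by positivity
  have hlk : 0 < Real.log k := Real.log_pos (by exact_mod_cast hk2)
  have hL : 0 < (k:ℝ) * Real.log k := mul_pos hK hlk
  have hAA := AA_pos a β m t k ha hβ ht hL
  calc GG N γ ε t k = AA a β m t k * (C0 * Real.exp ((m - 2*π*t/ε) * Real.log k
      + (m + q) * Real.log (Real.log k))) := GG_eq_AA N k a β γ ε m t t ha hβ ht ht hlk hK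
    _ < AA a β m t k * δ := by exact mul_lt_mul_of_pos_left hEk hAA
    _ = δ * AA a β m t k := mul_comm _ _

lemma factQ (N : ℕ) (a β γ ε m s t : ℝ) (ha : 0 < a) (hβ : 0 < β) (hγ : 0 < γ)
    (hs : 0 < s) (ht : 0 < t) (hα : 0 < m - 2*π*t/ε) :
    ∀ᶠ k : ℕ in atTop, AA a β m s k < GG N γ ε t k := by
  set q : ℝ := -((N:ℝ)-1)/2 with hq
  set C0 : ℝ := (γ/4) * t ^ q * s ^ m / (a*β) with hC0
  have hC0pos : 0 < C0 := by
    have h1 := Real.rpow_pos_of_pos ht q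
    have h2 := Real.rpow_pos_of_pos hs m
    rw [hC0]; positivity
  have hE : Tendsto (fun k : ℕ => C0 * Real.exp ((m - 2*π*t/ε) * Real.log k
      + (m + q) * Real.log (Real.log k))) atTop atTop := by
    have hcomp : Tendsto (fun k : ℕ => (m - 2*π*t/ε) * Real.log k
        + (m + q) * Real.log (Real.log k)) atTop atTop :=
      (lim_atTop hα).comp (Real.tendsto_log_atTop.comp tendsto_natCast_atTop_atTop)
    exact (Real.tendsto_exp_atTop.comp hcomp).const_mul_atTop hC0pos
  filter_upwards [hE.eventually_gt_atTop 1, eventually_ge_atTop 2] with k hEk hk2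
  have hK : (0:ℝ) < (k:ℝ) := by positivity
  have hlk : 0 < Real.log k := Real.log_pos (by exact_mod_cast hk2)
  have hL : 0 < (k:ℝ) * Real.log k := mul_pos hK hlk
  have hAA := AA_pos a β m s k ha hβ hs hL
  calc AA a β m s k = AA a β m s k * 1 := (mul_one _).symm
    _ < AA a β m s k * (C0 * Real.exp ((m - 2*π*t/ε) * Real.log k
        + (m + q) * Real.log (Real.log k))) := mul_lt_mul_of_pos_left hEk hAA
    _ = GG N γ ε t k := (GG_eq_AA N k a β γ ε m s t ha hβ hs ht hlk hK).symm
lemma crit_identity (N k : ℕ) (a β γ ε m : ℝ) (hε : 0 < ε) (hK : 0 < (k:ℝ))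
    (rb : ℝ) (hrb : 0 < rb) (hloc : IsLocalMax (F11 N k a β γ ε m) rb) :
    m * a * β / rb ^ m =
      (γ / 4) * (rb / (k : ℝ)) ^ (-((N : ℝ) - 1) / 2) *
        Real.exp (-(2 * π * rb) / (ε * (k : ℝ))) *
        (((N : ℝ) - 1) / 2 + 2 * π * rb / (ε * (k : ℝ))) := by
  set K := (k:ℝ) with hKdef
  set q : ℝ := -((N:ℝ)-1)/2 with hq
  have hbK : 0 < rb / K := div_pos hrb hK
  have hrm : HasDerivAt (fun r:ℝ => r ^ m) (m * rb ^ (m-1)) rb :=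
    Real.hasDerivAt_rpow_const (Or.inl hrb.ne')
  have h1 : HasDerivAt (fun r:ℝ => a * β / r ^ m)
      ((0 * rb ^ m - a * β * (m * rb ^ (m-1))) / (rb ^ m) ^ 2) rb :=
    (hasDerivAt_const rb (a*β)).div hrm (Real.rpow_pos_of_pos hrb m).ne'
  have hbase : HasDerivAt (fun r:ℝ => r / K) (1 / K) rb := by
    simpa using (hasDerivAt_id rb).div_const K
  have hpow : HasDerivAt (fun r:ℝ => (r / K) ^ q) (q * (rb / K) ^ (q-1) * (1/K)) rb := by
    have h := (Real.hasDerivAt_rpow_const (p := q) (Or.inl hbK.ne')).comp rb hbase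
    simpa [Function.comp_def] using h
  have hie : HasDerivAt (fun r:ℝ => -(2*π*r) / (ε*K)) (-(2*π) / (ε*K)) rb := by
    have heq : (fun r:ℝ => -(2*π*r) / (ε*K)) = (fun r:ℝ => r * (-(2*π) / (ε*K))) := by
      funext x; ring
    rw [heq]
    simpa using (hasDerivAt_id rb).mul_const (-(2*π) / (ε*K))
  have hexp := hie.exp
  have hg : HasDerivAt (fun r:ℝ => (γ/4) * (r/K) ^ q * Real.exp (-(2*π*r)/(ε*K)))
      ((γ/4) * (q * (rb/K)^(q-1) * (1/K)) * Real.exp (-(2*π*rb)/(ε*K))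
        + (γ/4) * (rb/K)^q * (Real.exp (-(2*π*rb)/(ε*K)) * (-(2*π)/(ε*K)))) rb :=
    (hpow.const_mul (γ/4)).mul hexp
  have hF : HasDerivAt (F11 N k a β γ ε m)
      ((0 * rb ^ m - a * β * (m * rb ^ (m-1))) / (rb ^ m) ^ 2
        - ((γ/4) * (q * (rb/K)^(q-1) * (1/K)) * Real.exp (-(2*π*rb)/(ε*K))
        + (γ/4) * (rb/K)^q * (Real.exp (-(2*π*rb)/(ε*K)) * (-(2*π)/(ε*K))))) rb := h1.sub hg
  have hD := hloc.hasDerivAt_eq_zero hF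
  rw [Real.rpow_sub hrb, Real.rpow_one, Real.rpow_sub hbK, Real.rpow_one] at hD
  have hX := (Real.rpow_pos_of_pos hrb m).ne'
  have hY := (Real.rpow_pos_of_pos hbK q).ne'
  have hE := (Real.exp_pos (-(2*π*rb)/(ε*K))).ne'
  have hNq : ((N:ℝ)-1)/2 = -q := by rw [hq]; ring
  rw [hNq]
  field_simp at hD ⊢
  linear_combination -hD
lemma F11_contOn (N k : ℕ) (a β γ ε m lo hi : ℝ) (hlo : 0 < lo) (hK : 0 < (k:ℝ)) :
    ContinuousOn (F11 N k a β γ ε m) (Set.Icc lo hi) := by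
  intro r hr
  have hrpos : 0 < r := lt_of_lt_of_le hlo hr.1
  have h1 : ContinuousAt (fun r:ℝ => a * β / r ^ m) r := by
    have hpow : ContinuousAt (fun r:ℝ => r ^ m) r :=
      Real.continuousAt_rpow_const r m (Or.inl hrpos.ne')
    exact continuousAt_const.div hpow (Real.rpow_pos_of_pos hrpos m).ne'
  have hdiv : ContinuousAt (fun r:ℝ => r / (k:ℝ)) r := continuousAt_id.div_const _
  have h2 : ContinuousAt (fun r:ℝ => (r/(k:ℝ)) ^ (-((N:ℝ)-1)/2)) r := by
    have h := Real.continuousAt_rpow_const (r/(k:ℝ)) (-((N:ℝ)-1)/2)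
      (Or.inl (div_pos hrpos hK).ne')
    have := ContinuousAt.comp (g := fun x : ℝ => x ^ (-((N:ℝ)-1)/2))
      (f := fun r : ℝ => r / (k:ℝ)) h hdiv
    simpa [Function.comp_def] using this
  have h3 : ContinuousAt (fun r:ℝ => Real.exp (-(2*π*r)/(ε*(k:ℝ)))) r := by
    apply Real.continuous_exp.continuousAt.comp
    fun_prop
  exact ((h1.sub ((continuousAt_const.mul h2).mul h3)).continuousWithinAt)


/-- for large `k`, `F₁₁` attains its maximum over `S_k` at an interior
point `r̄_k`; every maximizer satisfies `r̄_k = (εm/(2π) + o(1)) k ln k`, `F₁₁(r̄_k) > 0`,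
and the critical-point identity
`maβ/r̄^m = (γ/4)(r̄/k)^{-(N-1)/2} e^{-2πr̄/(εk)} ((N-1)/2 + 2πr̄/(εk))`. -/
theorem maximizer (N : ℕ) (hN : 3 ≤ N) (a β γ ε m θ : ℝ)
    (ha : 0 < a) (hβ : 0 < β) (hγ : 0 < γ) (hε : 0 < ε) (hm : 1 < m)
    (hθ : 0 < θ) (hθ' : θ < ε * m / (2 * π)) :
    (∃ k₀ : ℕ, ∀ k : ℕ, k₀ ≤ k →
      (∃ rb ∈ Set.Ioo ((ε * m / (2 * π) - θ) * (k * Real.log k))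
            ((ε * m / (2 * π) + θ) * (k * Real.log k)),
          IsMaxOn (F11 N k a β γ ε m) (Sk ε m θ k) rb) ∧
      ∀ rb ∈ Sk ε m θ k, IsMaxOn (F11 N k a β γ ε m) (Sk ε m θ k) rb →
        rb ∈ Set.Ioo ((ε * m / (2 * π) - θ) * (k * Real.log k))
            ((ε * m / (2 * π) + θ) * (k * Real.log k)) ∧
        0 < F11 N k a β γ ε m rb ∧
        m * a * β / rb ^ m =
          (γ / 4) * (rb / (k : ℝ)) ^ (-((N : ℝ) - 1) / 2) *
            Real.exp (-(2 * π * rb) / (ε * (k : ℝ))) *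
            (((N : ℝ) - 1) / 2 + 2 * π * rb / (ε * (k : ℝ)))) ∧
    (∀ η : ℝ, 0 < η → ∃ k₁ : ℕ, ∀ k : ℕ, k₁ ≤ k →
      ∀ rb ∈ Sk ε m θ k, IsMaxOn (F11 N k a β γ ε m) (Sk ε m θ k) rb →
        |rb - ε * m / (2 * π) * ((k : ℝ) * Real.log k)| ≤ η * ((k : ℝ) * Real.log k)) := by
  have hπ := Real.pi_pos
  have hc0 : 0 < ε * m / (2 * π) := by positivity
  set c : ℝ := ε * m / (2 * π) with hcdef
  have key : ∀ t : ℝ, m - 2*π*t/ε = 2*π/ε * (c - t) := by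
    intro t; rw [hcdef]; field_simp
  have hcθ : 0 < c - θ := by linarith
  -- the main uniform claim
  have MAIN : ∀ η' : ℝ, 0 < η' → η' ≤ θ → ∃ kk : ℕ, ∀ k : ℕ, kk ≤ k →
      2 ≤ k ∧ ∀ rb ∈ Sk ε m θ k, IsMaxOn (F11 N k a β γ ε m) (Sk ε m θ k) rb →
        (c - η') * ((k:ℝ) * Real.log k) < rb ∧ rb < (c + η') * ((k:ℝ) * Real.log k) ∧
        0 < F11 N k a β γ ε m rb := by
    intro η' hη'0 hη'θ
    set t₁ : ℝ := c + η'/2 with ht₁def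
    have ht₁pos : 0 < t₁ := by rw [ht₁def]; linarith
    have hcη'pos : 0 < c + η' := by linarith
    set ρ : ℝ := (t₁/(c+η')) ^ m with hρdef
    have hρ0 : 0 < ρ := Real.rpow_pos_of_pos (div_pos ht₁pos hcη'pos) m
    have hρ1 : ρ < 1 := by
      rw [hρdef]
      apply Real.rpow_lt_one (by positivity) _ (by linarith)
      rw [div_lt_one hcη'pos]; rw [ht₁def]; linarith
    have hQ : ∀ᶠ k : ℕ in atTop, AA a β m (c-θ) k < GG N γ ε (c-η') k := by
      apply factQ N a β γ ε m (c-θ) (c-η') ha hβ hγ hcθ (by linarith)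
      have h := key (c-η')
      rw [show 2*π/ε * (c - (c-η')) = 2*π/ε*η' by ring] at h
      rw [h]; positivity
    have hP : ∀ᶠ k : ℕ in atTop, GG N γ ε t₁ k < (1-ρ) * AA a β m t₁ k := by
      apply factP N a β γ ε m t₁ (1-ρ) ha hβ ht₁pos (by linarith)
      have h := key t₁
      rw [show 2*π/ε * (c - t₁) = -(2*π/ε*(η'/2)) by rw [ht₁def]; ring] at h
      have hpos : 0 < 2*π/ε*(η'/2) := by positivity
      rw [h]; linarith
    obtain ⟨kk, hkk⟩ := eventually_atTop.1 ((hQ.and hP).and (eventually_ge_atTop 2))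
    refine ⟨kk, fun k hk => ?_⟩
    obtain ⟨⟨hQk, hPk⟩, hk2⟩ := hkk k hk
    refine ⟨hk2, fun rb hrbS hrbmax => ?_⟩
    have hK : (0:ℝ) < (k:ℝ) := by exact_mod_cast (show 0 < k by omega)
    have hlk : 0 < Real.log k := Real.log_pos (by exact_mod_cast hk2)
    have hL : 0 < (k:ℝ) * Real.log k := mul_pos hK hlk
    set L : ℝ := (k:ℝ) * Real.log k with hLdef
    have hSk : Sk ε m θ k = Set.Icc ((c-θ)*L) ((c+θ)*L) := rfl
    rw [hSk] at hrbS hrbmax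
    have hrb_lo : (c-θ)*L ≤ rb := hrbS.1
    have hrb_hi : rb ≤ (c+θ)*L := hrbS.2
    have hrbpos : 0 < rb := lt_of_lt_of_le (by positivity) hrb_lo
    have ht₁mem : t₁ * L ∈ Set.Icc ((c-θ)*L) ((c+θ)*L) := by
      constructor
      · apply mul_le_mul_of_nonneg_right (by rw [ht₁def]; linarith) hL.le
      · apply mul_le_mul_of_nonneg_right (by rw [ht₁def]; linarith) hL.le
    have hmax₁ : F11 N k a β γ ε m (t₁ * L) ≤ F11 N k a β γ ε m rb := hrbmax ht₁mem
    have hf₁ : F11 N k a β γ ε m (t₁ * L) = AA a β m t₁ k - GG N γ ε t₁ k :=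
      F11_at N k a β γ ε m t₁ hK hε.ne'
    have hAA₁ : 0 < AA a β m t₁ k := AA_pos a β m t₁ k ha hβ ht₁pos hL
    have hρAA : AA a β m (c+η') k = ρ * AA a β m t₁ k :=
      AA_scale a β m t₁ (c+η') k ht₁pos hcη'pos hL
    have hlow : ρ * AA a β m t₁ k < F11 N k a β γ ε m (t₁ * L) := by
      rw [hf₁]; nlinarith
    have hfrbpos : 0 < F11 N k a β γ ε m rb := by nlinarith
    have hub : rb < (c + η') * L := by
      by_contra hcon
      push_neg at hcon
      have h1 : a * β / rb ^ m ≤ a * β / ((c+η')*L) ^ m :=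
        fpart_anti a β m (by positivity) (by linarith) _ rb (by positivity) hcon
      have h2 : 0 ≤ gfun N k γ ε rb := gfun_nonneg N k γ ε hγ.le rb hrbpos.le
      have h3 : F11 N k a β γ ε m rb ≤ AA a β m (c+η') k := by
        rw [F11_eq]
        have : AA a β m (c+η') k = a * β / ((c+η')*L) ^ m := rfl
        linarith
      linarith
    have hlb : (c - η') * L < rb := by
      by_contra hcon
      push_neg at hcon
      have h1 : a * β / rb ^ m ≤ a * β / ((c-θ)*L) ^ m :=
        fpart_anti a β m (by positivity) (by linarith) _ rb (by positivity) hrb_lo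
      have h2 : gfun N k γ ε ((c-η')*L) ≤ gfun N k γ ε rb :=
        gfun_anti N k γ ε hγ.le hε hK rb ((c-η')*L) hrbpos hcon hN
      have h3 : gfun N k γ ε ((c-η')*L) = GG N γ ε (c-η') k :=
        gfun_at N k γ ε (c-η') hK hε.ne'
      have h4 : AA a β m (c-θ) k = a * β / ((c-θ)*L) ^ m := rfl
      have h5 : F11 N k a β γ ε m rb ≤ AA a β m (c-θ) k - GG N γ ε (c-η') k := by
        rw [F11_eq]; linarith
      linarith
    exact ⟨hlb, hub, hfrbpos⟩
  constructor
  · -- Part 1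
    obtain ⟨kk, hkk⟩ := MAIN θ hθ le_rfl
    refine ⟨kk, fun k hk => ?_⟩
    obtain ⟨hk2, hchar⟩ := hkk k hk
    have hK : (0:ℝ) < (k:ℝ) := by exact_mod_cast (show 0 < k by omega)
    have hlk : 0 < Real.log k := Real.log_pos (by exact_mod_cast hk2)
    have hL : 0 < (k:ℝ) * Real.log k := mul_pos hK hlk
    set L : ℝ := (k:ℝ) * Real.log k with hLdef
    have hSk : Sk ε m θ k = Set.Icc ((c-θ)*L) ((c+θ)*L) := rfl
    have hlopos : 0 < (c-θ)*L := by positivity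
    have hne : ((Sk ε m θ k)).Nonempty := by
      rw [hSk]
      exact Set.nonempty_Icc.2 (mul_le_mul_of_nonneg_right (by linarith) hL.le)
    have hcont : ContinuousOn (F11 N k a β γ ε m) (Sk ε m θ k) := by
      rw [hSk]; exact F11_contOn N k a β γ ε m _ _ hlopos hK
    obtain ⟨rb, hrbmem, hrbmax⟩ :=
      (hSk ▸ isCompact_Icc).exists_isMaxOn hne hcont
    constructor
    · obtain ⟨h1, h2, _⟩ := hchar rb hrbmem hrbmax
      exact ⟨rb, ⟨h1, h2⟩, hrbmax⟩
    · intro rb' hrb'S hrb'max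
      obtain ⟨hlb, hub, hpos⟩ := hchar rb' hrb'S hrb'max
      have hIoo : rb' ∈ Set.Ioo ((c-θ)*L) ((c+θ)*L) := ⟨hlb, hub⟩
      refine ⟨hIoo, hpos, ?_⟩
      have hloc : IsLocalMax (F11 N k a β γ ε m) rb' :=
        hrb'max.isLocalMax (hSk ▸ Icc_mem_nhds hlb hub)
      exact crit_identity N k a β γ ε m hε hK rb'
        (lt_of_lt_of_le hlopos hIoo.1.le) hloc
  · -- Part 2
    intro η hη
    obtain ⟨kk, hkk⟩ := MAIN (min η θ) (lt_min hη hθ) (min_le_right _ _)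
    refine ⟨kk, fun k hk rb hrbS hrbmax => ?_⟩
    obtain ⟨hk2, hchar⟩ := hkk k hk
    obtain ⟨hlb, hub, _⟩ := hchar rb hrbS hrbmax
    have hK : (0:ℝ) < (k:ℝ) := by exact_mod_cast (show 0 < k by omega)
    have hlk : 0 < Real.log k := Real.log_pos (by exact_mod_cast hk2)
    have hL : 0 < (k:ℝ) * Real.log k := mul_pos hK hlk
    have hmin : min η θ * ((k:ℝ) * Real.log k) ≤ η * ((k:ℝ) * Real.log k) :=
      mul_le_mul_of_nonneg_right (min_le_left _ _) hL.le
    rw [abs_le]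
    have e1 : (c - min η θ) * ((k:ℝ) * Real.log k)
        = c * ((k:ℝ) * Real.log k) - min η θ * ((k:ℝ) * Real.log k) := by ring
    have e2 : (c + min η θ) * ((k:ℝ) * Real.log k)
        = c * ((k:ℝ) * Real.log k) + min η θ * ((k:ℝ) * Real.log k) := by ring
    constructor <;> linarith
end
end

section
/- Let a, b > 0 with a ≠ b, N ≥ 1, and let f, g : ℝ^N → ℝ be measurable functions with |f(x)| ≤ C₁ e^{−a|x|} and |g(x)| ≤ C₂ e^{−b|x|} for all x. Then there is a constant C (depending on a, b, N, C₁, C₂) such that for every ξ ∈ ℝ^N, ∫_{ℝ^N} |f(x) g(x − ξ)| dx ≤ C e^{−min{a,b}|ξ|}. -/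
/-!
Write `u = ‖x‖`, `v = ‖x - ξ‖` and `m = min a b`. Then `a u + b v = m (u + v) + |a - b| w` with
`w ∈ {u, v}`, and `u + v ≥ ‖ξ‖`, so `|f x g (x - ξ)|` is at most
`C₁ C₂ e^{-m‖ξ‖} (e^{-|a-b|‖x‖} + e^{-|a-b|‖x-ξ‖})`. Since `a ≠ b`, both summands are integrable,
and by translation invariance they have the same integral.
-/

noncomputable section
open Real MeasureTheory
open scoped Nat

theorem pow_mul_exp_neg_mul_le {ε t : ℝ} (hε : 0 < ε) (ht : 0 ≤ t) (n : ℕ) :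
    t ^ n * exp (-ε * t) ≤ n ! / ε ^ n := by
  have key := pow_div_factorial_le_exp _ (mul_nonneg hε.le ht) n
  rw [div_le_iff₀ (by positivity), mul_pow] at key
  rw [le_div_iff₀ (by positivity), neg_mul, exp_neg]
  calc t ^ n * (exp (ε * t))⁻¹ * ε ^ n = ε ^ n * t ^ n * (exp (ε * t))⁻¹ := by ring
    _ ≤ exp (ε * t) * n ! * (exp (ε * t))⁻¹ := by gcongr
    _ = n ! := by field_simp

theorem integrable_exp_neg_mul_norm {E : Type*} [NormedAddCommGroup E] [MeasurableSpace E]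
    [BorelSpace E] [SecondCountableTopology E] {μ : Measure E} [μ.HasTemperateGrowth]
    {ε : ℝ} (hε : 0 < ε) : Integrable (fun x : E ↦ exp (-ε * ‖x‖)) μ := by
  have h := integrable_of_le_of_pow_mul_le (μ := μ) (k := 0) (f := fun x : E ↦ exp (-ε * ‖x‖))
    (C₁ := 1) (C₂ := μ.integrablePower ! / ε ^ μ.integrablePower)
    (fun x ↦ by
      rw [norm_of_nonneg (exp_nonneg _), exp_le_one_iff]
      nlinarith [norm_nonneg x])
    (fun x ↦ by
      rw [norm_of_nonneg (exp_nonneg _), zero_add]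
      exact pow_mul_exp_neg_mul_le hε (norm_nonneg x) _)
    (by fun_prop)
  simpa [abs_of_nonneg (exp_nonneg _)] using h

theorem exp_neg_add_le_of_le_add {a b u v w : ℝ} (ha : 0 ≤ a) (hb : 0 ≤ b)
    (hw : w ≤ u + v) :
    exp (-(a * u + b * v)) ≤
      exp (-min a b * w) * (exp (-|a - b| * u) + exp (-|a - b| * v)) := by
  have hm : min a b * w ≤ min a b * (u + v) := mul_le_mul_of_nonneg_left hw (le_min ha hb)
  rw [mul_add, ← exp_add, ← exp_add]
  rcases le_total a b with h | h
  · have : exp (-(a * u + b * v)) ≤ exp (-min a b * w + -|a - b| * v) := by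
      rw [min_eq_left h, abs_of_nonpos (sub_nonpos.mpr h)] at *
      exact exp_le_exp.mpr (by nlinarith)
    linarith [exp_pos (-min a b * w + -|a - b| * u)]
  · have : exp (-(a * u + b * v)) ≤ exp (-min a b * w + -|a - b| * u) := by
      rw [min_eq_right h, abs_of_nonneg (sub_nonneg.mpr h)] at *
      exact exp_le_exp.mpr (by nlinarith)
    linarith [exp_pos (-min a b * w + -|a - b| * v)]

theorem integral_abs_mul_comp_sub_le {E : Type*} [NormedAddCommGroup E] [MeasurableSpace E]
    [MeasurableAdd E] {μ : Measure E} [μ.IsAddRightInvariant] {a b C₁ C₂ : ℝ}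
    (ha : 0 ≤ a) (hb : 0 ≤ b) {f g : E → ℝ}
    (hfb : ∀ x, |f x| ≤ C₁ * exp (-a * ‖x‖)) (hgb : ∀ x, |g x| ≤ C₂ * exp (-b * ‖x‖))
    (hint : Integrable (fun x : E ↦ exp (-|a - b| * ‖x‖)) μ) (ξ : E) :
    ∫ x, |f x * g (x - ξ)| ∂μ ≤
      C₁ * C₂ * (2 * ∫ x, exp (-|a - b| * ‖x‖) ∂μ) * exp (-min a b * ‖ξ‖) := by
  set ε := |a - b|
  have hC₁ : 0 ≤ C₁ := by simpa using (abs_nonneg _).trans (hfb 0)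
  have hC₂ : 0 ≤ C₂ := by simpa using (abs_nonneg _).trans (hgb 0)
  have hpointwise : ∀ x, |f x * g (x - ξ)| ≤
      C₁ * C₂ * exp (-min a b * ‖ξ‖) * (exp (-ε * ‖x‖) + exp (-ε * ‖x - ξ‖)) := fun x ↦
    calc |f x * g (x - ξ)| = |f x| * |g (x - ξ)| := abs_mul _ _
      _ ≤ C₁ * exp (-a * ‖x‖) * (C₂ * exp (-b * ‖x - ξ‖)) :=
          mul_le_mul (hfb x) (hgb _) (abs_nonneg _) (by positivity)
      _ = C₁ * C₂ * exp (-(a * ‖x‖ + b * ‖x - ξ‖)) := by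
          rw [neg_add, exp_add]; ring_nf
      _ ≤ C₁ * C₂ * (exp (-min a b * ‖ξ‖) * (exp (-ε * ‖x‖) + exp (-ε * ‖x - ξ‖))) :=
          mul_le_mul_of_nonneg_left
            (exp_neg_add_le_of_le_add ha hb (norm_le_norm_add_norm_sub x ξ)) (by positivity)
      _ = _ := (mul_assoc _ _ _).symm
  calc ∫ x, |f x * g (x - ξ)| ∂μ
      ≤ ∫ x, C₁ * C₂ * exp (-min a b * ‖ξ‖) * (exp (-ε * ‖x‖) + exp (-ε * ‖x - ξ‖)) ∂μ :=
        integral_mono_of_nonneg (.of_forall fun _ ↦ abs_nonneg _)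
          ((hint.add (hint.comp_sub_right ξ)).const_mul _) (.of_forall hpointwise)
    _ = _ := by
        rw [integral_const_mul, integral_add hint (hint.comp_sub_right ξ),
          integral_sub_right_eq_self (fun x ↦ exp (-ε * ‖x‖)) ξ]
        ring

theorem expInteraction_general (N : ℕ) (a b C₁ C₂ : ℝ)
    (ha : 0 < a) (hb : 0 < b) (hab : a ≠ b)
    (f g : EuclideanSpace ℝ (Fin N) → ℝ)
    (hfb : ∀ x, |f x| ≤ C₁ * Real.exp (-a * ‖x‖))
    (hgb : ∀ x, |g x| ≤ C₂ * Real.exp (-b * ‖x‖)) :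
    ∃ C : ℝ, ∀ ξ : EuclideanSpace ℝ (Fin N),
      (∫ x, |f x * g (x - ξ)|) ≤ C * Real.exp (-(min a b) * ‖ξ‖) :=
  ⟨_, integral_abs_mul_comp_sub_le ha.le hb.le hfb hgb
    (integrable_exp_neg_mul_norm (abs_pos.mpr (sub_ne_zero.mpr hab)))⟩

/-- the basic interaction estimate for exponentially decaying functions:
if `|f| ≤ C₁e^{-a|x|}` and `|g| ≤ C₂e^{-b|x|}` with `a ≠ b`, then
`∫ |f(x) g(x-ξ)| dx ≤ C e^{-min{a,b}|ξ|}`. -/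
theorem expInteraction (N : ℕ) (hN : 1 ≤ N) (a b C₁ C₂ : ℝ)
    (ha : 0 < a) (hb : 0 < b) (hab : a ≠ b)
    (f g : EuclideanSpace ℝ (Fin N) → ℝ) (hf : Measurable f) (hg : Measurable g)
    (hfb : ∀ x, |f x| ≤ C₁ * Real.exp (-a * ‖x‖))
    (hgb : ∀ x, |g x| ≤ C₂ * Real.exp (-b * ‖x‖)) :
    ∃ C : ℝ, ∀ ξ : EuclideanSpace ℝ (Fin N),
      (∫ x, |f x * g (x - ξ)|) ≤ C * Real.exp (-(min a b) * ‖ξ‖) :=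
  expInteraction_general N a b C₁ C₂ ha hb hab f g hfb hgb
end
end
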